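/- arXiv:2602.15415 — 10 statements merged into one kernel-verified Lean document; each statement's English description precedes it below -/
import Mathlib

section
/- Let I ⊆ ℝ be an open interval, H a nonzero real number, and B : I → ℝ³ a smooth nowhere-vanishing map with ⟨B,B⟩ = 0, ⟨B',B'⟩ = H², and H·det(B, B', B'') > 0 at every point of I. Define κ₂ := −⟨B'',B''⟩/(2H³), A := −(κ₂/H)·B + (1/H²)·B'', and C := (1/H)·B'. Then (A,B,C) satisfies the null frame conditions ⟨A,A⟩ = ⟨B,B⟩ = 0, ⟨A,B⟩ = −1, ⟨A,C⟩ = ⟨B,C⟩ = 0, ⟨C,C⟩ = 1, C = A × B, and the Frenet–Serret equations A' = κ₂·C, B' = H·C, C' = H·A + κ₂·B hold on I. -/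
/-!
Differentiating `⟨B,B⟩ = 0` and `⟨B',B'⟩ = H²` fixes the Gram matrix of `(B, B', B'')` up to
`⟨B'',B''⟩ = -2H³κ₂`; its determinant is `-H⁶`. In `𝕃³` one has `det(u,v,w)² = -det Gram(u,v,w)`,
so the sign hypothesis forces `det(B, B', B'') = H³`, and the frame identities for `(A, B, C)`
become linear algebra in the basis `(B, B', B'')`. Differentiating once more shows that `B'''` is
orthogonal to `B`, hence `B''' = Hκ₂' B + 2Hκ₂ B'`, which is exactly what `A' = κ₂ C` needs; the
other two Frenet equations follow directly from the definitions of `A` and `C`.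
-/

noncomputable section

/-- The Minkowski bilinear form on ℝ³ with signature (−,+,+):
`⟨x,y⟩ = −x₁y₁ + x₂y₂ + x₃y₃`. -/
def ml (x y : Fin 3 → ℝ) : ℝ := -(x 0 * y 0) + x 1 * y 1 + x 2 * y 2

/-- Determinant of the 3×3 matrix with columns `u`, `v`, `w`. -/
def det3 (u v w : Fin 3 → ℝ) : ℝ :=
  u 0 * (v 1 * w 2 - v 2 * w 1) - v 0 * (u 1 * w 2 - u 2 * w 1)
    + w 0 * (u 1 * v 2 - u 2 * v 1)

/-- The Lorentzian cross product on ℝ³: the unique vector with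
`ml (lcross u v) w = det3 u v w` for all `w`. -/
def lcross (u v : Fin 3 → ℝ) : Fin 3 → ℝ :=
  ![-(u 1 * v 2 - u 2 * v 1), u 2 * v 0 - u 0 * v 2, u 0 * v 1 - u 1 * v 0]

theorem ml_comm (u v : Fin 3 → ℝ) : ml u v = ml v u := by
  simp only [ml]; ring

theorem ml_add_left (u v w : Fin 3 → ℝ) : ml (u + v) w = ml u w + ml v w := by
  simp only [ml, Pi.add_apply]; ring

theorem ml_add_right (u v w : Fin 3 → ℝ) : ml u (v + w) = ml u v + ml u w := by
  simp only [ml, Pi.add_apply]; ring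

theorem ml_smul_left (a : ℝ) (u v : Fin 3 → ℝ) : ml (a • u) v = a * ml u v := by
  simp only [ml, Pi.smul_apply, smul_eq_mul]; ring

theorem ml_smul_right (a : ℝ) (u v : Fin 3 → ℝ) : ml u (a • v) = a * ml u v := by
  simp only [ml, Pi.smul_apply, smul_eq_mul]; ring

theorem ml_lcross (u v w : Fin 3 → ℝ) : ml (lcross u v) w = det3 u v w := by
  simp only [ml, lcross, det3, Matrix.cons_val_zero, Matrix.cons_val_one, Matrix.cons_val]; ring

theorem det3_sq_eq_neg_det_gram (u v w : Fin 3 → ℝ) :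
    det3 u v w ^ 2 = -(Matrix.of fun i j => ml (![u, v, w] i) (![u, v, w] j)).det := by
  simp only [Matrix.det_fin_three, Matrix.of_apply, Matrix.cons_val_zero, Matrix.cons_val_one,
    Matrix.cons_val, det3, ml]
  ring

theorem eq_of_ml_eq {u v w x y : Fin 3 → ℝ} (hd : det3 u v w ≠ 0)
    (hu : ml u x = ml u y) (hv : ml v x = ml v y) (hw : ml w x = ml w y) : x = y := by
  simp only [ml] at hu hv hw
  funext i
  refine mul_right_cancel₀ hd ?_
  fin_cases i <;> simp only [det3] <;> dsimp
  -- the multipliers are the cofactors of `det3 u v w`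
  · linear_combination (-(v 1 * w 2 - v 2 * w 1)) * hu + (u 1 * w 2 - u 2 * w 1) * hv +
      (-(u 1 * v 2 - u 2 * v 1)) * hw
  · linear_combination (-(v 0 * w 2 - v 2 * w 0)) * hu + (u 0 * w 2 - u 2 * w 0) * hv +
      (-(u 0 * v 2 - u 2 * v 0)) * hw
  · linear_combination (v 0 * w 1 - v 1 * w 0) * hu + (-(u 0 * w 1 - u 1 * w 0)) * hv +
      (u 0 * v 1 - u 1 * v 0) * hw

section NullBasis

variable {H : ℝ} {b b₁ b₂ : Fin 3 → ℝ}

theorem det3_eq_pow_three (h00 : ml b b = 0) (h01 : ml b b₁ = 0) (h02 : ml b b₂ = -H ^ 2)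
    (h11 : ml b₁ b₁ = H ^ 2) (h12 : ml b₁ b₂ = 0) (hd : 0 < H * det3 b b₁ b₂) :
    det3 b b₁ b₂ = H ^ 3 := by
  have hsq : det3 b b₁ b₂ ^ 2 = (H ^ 3) ^ 2 := by
    simp only [det3_sq_eq_neg_det_gram, Matrix.det_fin_three, Matrix.of_apply,
      Matrix.cons_val_zero, Matrix.cons_val_one, Matrix.cons_val, ml_comm b₁ b, ml_comm b₂ b,
      ml_comm b₂ b₁, h00, h01, h02, h11, h12]
    ring
  rcases sq_eq_sq_iff_eq_or_eq_neg.1 hsq with h | h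
  · exact h
  · rw [h] at hd
    nlinarith [pow_pos (sq_pos_of_ne_zero (left_ne_zero_of_mul hd.ne')) 2]

theorem eq_smul_add_smul_of_ml_eq_zero (hH : H ≠ 0) (h00 : ml b b = 0) (h01 : ml b b₁ = 0)
    (h02 : ml b b₂ = -H ^ 2) (h11 : ml b₁ b₁ = H ^ 2) (h12 : ml b₁ b₂ = 0)
    (hd : det3 b b₁ b₂ ≠ 0) {v : Fin 3 → ℝ} (hv : ml b v = 0) :
    v = (-(ml b₂ v / H ^ 2)) • b + (ml b₁ v / H ^ 2) • b₁ := by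
  refine eq_of_ml_eq hd ?_ ?_ ?_ <;>
    simp only [ml_add_right, ml_smul_right, ml_comm b₁ b, ml_comm b₂ b, ml_comm b₂ b₁, hv, h00,
      h01, h02, h11, h12] <;>
    field_simp <;> ring

theorem nullFrame_of_gram {k : ℝ} (hH : H ≠ 0) (h00 : ml b b = 0) (h01 : ml b b₁ = 0)
    (h02 : ml b b₂ = -H ^ 2) (h11 : ml b₁ b₁ = H ^ 2) (h12 : ml b₁ b₂ = 0)
    (h22 : ml b₂ b₂ = -(2 * H ^ 3 * k)) (hd : 0 < H * det3 b b₁ b₂) {a c : Fin 3 → ℝ}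
    (ha : a = (-(k / H)) • b + (1 / H ^ 2) • b₂) (hc : c = (1 / H) • b₁) :
    ml a a = 0 ∧ ml a b = -1 ∧ ml a c = 0 ∧ ml b c = 0 ∧ ml c c = 1 ∧ c = lcross a b := by
  have hd3 := det3_eq_pow_three h00 h01 h02 h11 h12 hd
  subst ha hc
  have hd0 : det3 b b₁ b₂ ≠ 0 := by rw [hd3]; exact pow_ne_zero 3 hH
  have hcross : ∀ w, det3 ((-(k / H)) • b + (1 / H ^ 2) • b₂) b w = det3 b w b₂ / H ^ 2 := by
    intro w; simp only [det3, Pi.add_apply, Pi.smul_apply, smul_eq_mul]; ring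
  have hbb : det3 b b b₂ = 0 := by simp only [det3]; ring
  have hb₂b₂ : det3 b b₂ b₂ = 0 := by simp only [det3]; ring
  refine ⟨?_, ?_, ?_, ?_, ?_, eq_of_ml_eq hd0 ?_ ?_ ?_⟩
  all_goals simp only [ml_add_left, ml_add_right, ml_smul_left, ml_smul_right, ml_comm b₂ b,
    ml_comm b₂ b₁, ml_comm _ (lcross _ _), ml_lcross, hcross, hd3, hbb, hb₂b₂, h00, h01, h02, h11,
    h12, h22]
  all_goals field_simp
  all_goals ring

end NullBasis

theorem HasDerivAt.ml {f g : ℝ → Fin 3 → ℝ} {f' g' : Fin 3 → ℝ} {s : ℝ}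
    (hf : HasDerivAt f f' s) (hg : HasDerivAt g g' s) :
    HasDerivAt (fun t => ml (f t) (g t)) (ml f' (g s) + ml (f s) g') s := by
  have hf' := hasDerivAt_pi.1 hf
  have hg' := hasDerivAt_pi.1 hg
  refine ((((hf' 0).mul (hg' 0)).neg.add ((hf' 1).mul (hg' 1))).add
    ((hf' 2).mul (hg' 2))).congr_deriv ?_
  simp only [_root_.ml]; ring

theorem ml_deriv_add_ml_deriv_eq_zero {I : Set ℝ} (hI : IsOpen I) {f g : ℝ → Fin 3 → ℝ}
    (hf : DifferentiableOn ℝ f I) (hg : DifferentiableOn ℝ g I) {c : ℝ}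
    (hfg : ∀ t ∈ I, ml (f t) (g t) = c) {s : ℝ} (hs : s ∈ I) :
    ml (deriv f s) (g s) + ml (f s) (deriv g s) = 0 := by
  have hconst : HasDerivAt (fun t => ml (f t) (g t)) 0 s :=
    (hasDerivAt_const s c).congr_of_eventuallyEq (Filter.eventually_of_mem (hI.mem_nhds hs) hfg)
  exact ((hf.hasDerivAt (hI.mem_nhds hs)).ml (hg.hasDerivAt (hI.mem_nhds hs))).unique hconst

theorem ml_derivs_of_lightlike {I : Set ℝ} (hI : IsOpen I) {B : ℝ → Fin 3 → ℝ} {H : ℝ}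
    (hB₀ : DifferentiableOn ℝ B I) (hB₁ : DifferentiableOn ℝ (deriv B) I)
    (hB₂ : DifferentiableOn ℝ (deriv (deriv B)) I)
    (hBB : ∀ s ∈ I, ml (B s) (B s) = 0) (hB'B' : ∀ s ∈ I, ml (deriv B s) (deriv B s) = H ^ 2)
    {s : ℝ} (hs : s ∈ I) :
    ml (B s) (deriv B s) = 0 ∧ ml (B s) (deriv (deriv B) s) = -H ^ 2 ∧
      ml (deriv B s) (deriv (deriv B) s) = 0 ∧ ml (B s) (deriv (deriv (deriv B)) s) = 0 ∧
      ml (deriv B s) (deriv (deriv (deriv B)) s) =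
        -ml (deriv (deriv B) s) (deriv (deriv B) s) := by
  have h01 : ∀ t ∈ I, ml (B t) (deriv B t) = 0 := fun t ht => by
    linarith [ml_deriv_add_ml_deriv_eq_zero hI hB₀ hB₀ hBB ht, ml_comm (deriv B t) (B t)]
  have h12 : ∀ t ∈ I, ml (deriv B t) (deriv (deriv B) t) = 0 := fun t ht => by
    linarith [ml_deriv_add_ml_deriv_eq_zero hI hB₁ hB₁ hB'B' ht,
      ml_comm (deriv (deriv B) t) (deriv B t)]
  have h02 : ∀ t ∈ I, ml (B t) (deriv (deriv B) t) = -H ^ 2 := fun t ht => by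
    linarith [ml_deriv_add_ml_deriv_eq_zero hI hB₀ hB₁ h01 ht, hB'B' t ht]
  refine ⟨h01 s hs, h02 s hs, h12 s hs, ?_, ?_⟩
  · linarith [ml_deriv_add_ml_deriv_eq_zero hI hB₀ hB₂ h02 hs, h12 s hs]
  · linarith [ml_deriv_add_ml_deriv_eq_zero hI hB₁ hB₂ h12 hs]

/-- The Frenet equation `A' = κ C`, once `B''' = H κ' B + 2 H κ B'`. -/
theorem hasDerivAt_nullFrame_A {H : ℝ} (hH : H ≠ 0) {κ : ℝ → ℝ} {κ' : ℝ}
    {B B₂ : ℝ → Fin 3 → ℝ} {b₁ : Fin 3 → ℝ} {s : ℝ} (hκ : HasDerivAt κ κ' s)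
    (hB : HasDerivAt B b₁ s) (hB₂ : HasDerivAt B₂ ((H * κ') • B s + (2 * H * κ s) • b₁) s) :
    HasDerivAt (fun t => (-(κ t / H)) • B t + (1 / H ^ 2) • B₂ t) (κ s • (1 / H) • b₁) s := by
  refine (((hκ.div_const H).neg.smul hB).add (hB₂.const_smul (1 / H ^ 2))).congr_deriv ?_
  simp only [Pi.neg_apply]
  match_scalars <;> field_simp <;> ring

theorem stmt1_general
    (I : Set ℝ) (hIopen : IsOpen I)
    (H : ℝ) (hH : H ≠ 0)
    (B : ℝ → Fin 3 → ℝ)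
    (hBsm : ContDiffOn ℝ (⊤ : ℕ∞) B I)
    (hBB : ∀ s ∈ I, ml (B s) (B s) = 0)
    (hB'B' : ∀ s ∈ I, ml (deriv B s) (deriv B s) = H ^ 2)
    (hdet : ∀ s ∈ I, 0 < H * det3 (B s) (deriv B s) (deriv (deriv B) s))
    (κ₂ : ℝ → ℝ) (A C : ℝ → Fin 3 → ℝ)
    (hκdef : ∀ s, κ₂ s = -(ml (deriv (deriv B) s) (deriv (deriv B) s)) / (2 * H ^ 3))
    (hAdef : ∀ s, A s = (-(κ₂ s / H)) • B s + (1 / H ^ 2) • deriv (deriv B) s)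
    (hCdef : ∀ s, C s = (1 / H) • deriv B s) :
    ∀ s ∈ I,
      ml (A s) (A s) = 0 ∧
      ml (B s) (B s) = 0 ∧
      ml (A s) (B s) = -1 ∧
      ml (A s) (C s) = 0 ∧
      ml (B s) (C s) = 0 ∧
      ml (C s) (C s) = 1 ∧
      C s = lcross (A s) (B s) ∧
      deriv A s = κ₂ s • C s ∧
      deriv B s = H • C s ∧
      deriv C s = H • A s + κ₂ s • B s := by
  intro s hs
  have hB₁ : ContDiffOn ℝ (⊤ : ℕ∞) (deriv B) I :=
    hBsm.deriv_of_isOpen hIopen (by exact_mod_cast le_top)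
  have hB₂ : ContDiffOn ℝ (⊤ : ℕ∞) (deriv (deriv B)) I :=
    hB₁.deriv_of_isOpen hIopen (by exact_mod_cast le_top)
  have hdiff {f : ℝ → Fin 3 → ℝ} (hf : ContDiffOn ℝ (⊤ : ℕ∞) f I) : DifferentiableOn ℝ f I :=
    hf.differentiableOn (by simp)
  have hderiv {f : ℝ → Fin 3 → ℝ} (hf : ContDiffOn ℝ (⊤ : ℕ∞) f I) : HasDerivAt f (deriv f s) s :=
    (hdiff hf).hasDerivAt (hIopen.mem_nhds hs)
  obtain ⟨h01, h02, h12, h03, h13⟩ :=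
    ml_derivs_of_lightlike hIopen (hdiff hBsm) (hdiff hB₁) (hdiff hB₂) hBB hB'B' hs
  have h22 : ml (deriv (deriv B) s) (deriv (deriv B) s) = -(2 * H ^ 3 * κ₂ s) := by
    rw [hκdef]; field_simp
  have hκ : HasDerivAt κ₂ (-(ml (deriv (deriv (deriv B)) s) (deriv (deriv B) s) +
      ml (deriv (deriv B) s) (deriv (deriv (deriv B)) s)) / (2 * H ^ 3)) s := by
    rw [show κ₂ = _ from funext hκdef]
    exact ((hderiv hB₂).ml (hderiv hB₂)).neg.div_const _
  have hB₃ : deriv (deriv (deriv B)) s = (H * deriv κ₂ s) • B s + (2 * H * κ₂ s) • deriv B s := by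
    rw [eq_smul_add_smul_of_ml_eq_zero hH (hBB s hs) h01 h02 (hB'B' s hs) h12
      (right_ne_zero_of_mul (hdet s hs).ne') h03, h13, h22, hκ.deriv,
      ml_comm (deriv (deriv (deriv B)) s)]
    match_scalars <;> field_simp
    ring
  obtain ⟨hAA, hAB, hAC, hBC, hCC, hcross⟩ := nullFrame_of_gram hH (hBB s hs) h01 h02
    (hB'B' s hs) h12 h22 (hdet s hs) (hAdef s) (hCdef s)
  refine ⟨hAA, hBB s hs, hAB, hAC, hBC, hCC, hcross, ?_, ?_, ?_⟩
  · rw [show A = _ from funext hAdef, hCdef]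
    exact (hasDerivAt_nullFrame_A hH hκ.differentiableAt.hasDerivAt (hderiv hBsm)
      (hB₃ ▸ hderiv hB₂)).deriv
  · rw [hCdef, smul_smul, mul_one_div_cancel hH, one_smul]
  · rw [show C = _ from funext hCdef, deriv_fun_const_smul _ (hderiv hB₁).differentiableAt,
      hAdef]
    match_scalars <;> field_simp
    ring

/-- converse construction of a null frame satisfying the
B-scroll Frenet–Serret equations from a lightlike vector field `B`. -/
theorem stmt1
    (I : Set ℝ) (hIopen : IsOpen I) (hIconn : I.OrdConnected)
    (H : ℝ) (hH : H ≠ 0)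
    (B : ℝ → Fin 3 → ℝ)
    (hBsm : ContDiffOn ℝ (⊤ : ℕ∞) B I)
    (hBne : ∀ s ∈ I, B s ≠ 0)
    (hBB : ∀ s ∈ I, ml (B s) (B s) = 0)
    (hB'B' : ∀ s ∈ I, ml (deriv B s) (deriv B s) = H ^ 2)
    (hdet : ∀ s ∈ I, 0 < H * det3 (B s) (deriv B s) (deriv (deriv B) s))
    (κ₂ : ℝ → ℝ) (A C : ℝ → Fin 3 → ℝ)
    (hκdef : ∀ s, κ₂ s = -(ml (deriv (deriv B) s) (deriv (deriv B) s)) / (2 * H ^ 3))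
    (hAdef : ∀ s, A s = (-(κ₂ s / H)) • B s + (1 / H ^ 2) • deriv (deriv B) s)
    (hCdef : ∀ s, C s = (1 / H) • deriv B s) :
    ∀ s ∈ I,
      ml (A s) (A s) = 0 ∧
      ml (B s) (B s) = 0 ∧
      ml (A s) (B s) = -1 ∧
      ml (A s) (C s) = 0 ∧
      ml (B s) (C s) = 0 ∧
      ml (C s) (C s) = 1 ∧
      C s = lcross (A s) (B s) ∧
      deriv A s = κ₂ s • C s ∧
      deriv B s = H • C s ∧
      deriv C s = H • A s + κ₂ s • B s :=
  stmt1_general I hIopen H hH B hBsm hBB hB'B' hdet κ₂ A C hκdef hAdef hCdef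
end
end

section
/- Let I ⊆ ℝ be an open interval and γ = (γ₁,γ₂,γ₃) : I → ℝ³ a smooth regular curve (γ' nowhere zero) with ⟨γ',γ'⟩ = 0 and γ₁'(s) ≠ γ₂'(s) for all s ∈ I. Then there exist a smooth function h : I → ℝ and a nowhere-vanishing smooth function ω̂ : I → ℝ such that γ'(s) = (ω̂(s)/2)·(−1 − h(s)², 1 − h(s)², 2h(s)) for all s ∈ I. -/
/-! Take `ω̂ = γ₂' − γ₁'` and `h = γ₃' / ω̂`. The third coordinate then matches by construction,
and the null condition, read as `γ₃'² = (γ₁' − γ₂')(γ₁' + γ₂')`, gives `γ₁' + γ₂' = −ω̂ h²`,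
which together with `γ₂' − γ₁' = ω̂` yields the first two coordinates. -/

noncomputable section

theorem eq_smul_of_ml_self_eq_zero {v : Fin 3 → ℝ} (hv : ml v v = 0) (h01 : v 0 ≠ v 1) :
    v = ((v 1 - v 0) / 2) •
      ![-1 - (v 2 / (v 1 - v 0)) ^ 2, 1 - (v 2 / (v 1 - v 0)) ^ 2, 2 * (v 2 / (v 1 - v 0))] := by
  have hω : v 1 - v 0 ≠ 0 := sub_ne_zero.2 h01.symm
  unfold ml at hv
  funext i
  fin_cases i <;>
    simp only [Fin.zero_eta, Fin.mk_one, Fin.reduceFinMk, Pi.smul_apply, Matrix.cons_val,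
      smul_eq_mul] <;>
    field_simp <;> linear_combination hv

theorem ContDiffOn.deriv_apply {I : Set ℝ} (hI : IsOpen I) {γ : ℝ → Fin 3 → ℝ}
    (hγ : ContDiffOn ℝ (⊤ : ℕ∞) γ I) (i : Fin 3) :
    ContDiffOn ℝ (⊤ : ℕ∞) (fun s => deriv γ s i) I :=
  (contDiff_apply ℝ ℝ i).comp_contDiffOn (hγ.deriv_of_isOpen hI (by exact_mod_cast le_top))

theorem stmt4_general
    (I : Set ℝ) (hIopen : IsOpen I)
    (γ : ℝ → Fin 3 → ℝ)
    (hγsm : ContDiffOn ℝ (⊤ : ℕ∞) γ I)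
    (hnull : ∀ s ∈ I, ml (deriv γ s) (deriv γ s) = 0)
    (h12 : ∀ s ∈ I, deriv γ s 0 ≠ deriv γ s 1) :
    ∃ h ω : ℝ → ℝ,
      ContDiffOn ℝ (⊤ : ℕ∞) h I ∧ ContDiffOn ℝ (⊤ : ℕ∞) ω I ∧
      (∀ s ∈ I, ω s ≠ 0) ∧
      ∀ s ∈ I, deriv γ s =
        (ω s / 2) • ![-1 - h s ^ 2, 1 - h s ^ 2, 2 * h s] := by
  have hωsm : ContDiffOn ℝ (⊤ : ℕ∞) (fun s => deriv γ s 1 - deriv γ s 0) I :=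
    (hγsm.deriv_apply hIopen 1).sub (hγsm.deriv_apply hIopen 0)
  have hωne : ∀ s ∈ I, deriv γ s 1 - deriv γ s 0 ≠ 0 :=
    fun s hs => sub_ne_zero.2 (h12 s hs).symm
  exact ⟨_, _, (hγsm.deriv_apply hIopen 2).div hωsm hωne, hωsm, hωne,
    fun s hs => eq_smul_of_ml_self_eq_zero (hnull s hs) (h12 s hs)⟩

/-- Weierstrass-like representation of a regular null curve with
`γ₁' ≠ γ₂'`: there exist `h` and a nowhere-vanishing `ω̂` with
`γ' = (ω̂/2)(−1−h², 1−h², 2h)`. -/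
theorem stmt4
    (I : Set ℝ) (hIopen : IsOpen I) (hIconn : I.OrdConnected)
    (γ : ℝ → Fin 3 → ℝ)
    (hγsm : ContDiffOn ℝ (⊤ : ℕ∞) γ I)
    (hreg : ∀ s ∈ I, deriv γ s ≠ 0)
    (hnull : ∀ s ∈ I, ml (deriv γ s) (deriv γ s) = 0)
    (h12 : ∀ s ∈ I, deriv γ s 0 ≠ deriv γ s 1) :
    ∃ h ω : ℝ → ℝ,
      ContDiffOn ℝ (⊤ : ℕ∞) h I ∧ ContDiffOn ℝ (⊤ : ℕ∞) ω I ∧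
      (∀ s ∈ I, ω s ≠ 0) ∧
      ∀ s ∈ I, deriv γ s =
        (ω s / 2) • ![-1 - h s ^ 2, 1 - h s ^ 2, 2 * h s] :=
  stmt4_general I hIopen γ hγsm hnull h12
end
end

section
/- Let I ⊆ ℝ be an open interval, H a nonzero real number, and h : I → ℝ a smooth function with h'(s) ≠ 0 for all s ∈ I. Let γ : I → ℝ³ be any smooth curve satisfying γ'(s) = (H/(2h'(s)))·(−1 − h(s)², 1 − h(s)², 2h(s)). Then γ is a regular null curve, ⟨γ'',γ''⟩ = H² on I, γ'(s) and γ''(s) are linearly independent for every s ∈ I, and ⟨γ''',γ'''⟩ = 2H²·S(h) on I, where S(h) is the Schwarzian derivative of h. -/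
noncomputable section

/-! The derivative `γ' = φ • N(h)`, with `φ = H / (2h')`, is a multiple of the parametrization
`N(x) = (-1 - x², 1 - x², 2x)` of the null cone. The Minkowski Gram matrix of `N, N', N''` has
`⟨N', N'⟩ = 4`, `⟨N, N''⟩ = -4` and all other entries `0`, so `aN + bN' + cN''` has square norm
`4b² - 8ac`, and such combinations along `h` are closed under differentiation. Since `φ h' = H / 2`
is constant, `γ'' = φ' N + (H/2) N'` has square norm `H²`, and
`γ''' = φ'' N + φ' h' N' + (H h' / 2) N''` has square norm `4 (φ' h')² - 4 H h' φ'' = 2 H² S(h)`. -/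

open scoped ContDiff

def nullVec (x : ℝ) : Fin 3 → ℝ := ![-1 - x ^ 2, 1 - x ^ 2, 2 * x]

def nullVecDeriv (x : ℝ) : Fin 3 → ℝ := ![-2 * x, -2 * x, 2]

def nullVecDeriv2 : Fin 3 → ℝ := ![-2, -2, 0]

def nullFrame (a b c x : ℝ) : Fin 3 → ℝ :=
  a • nullVec x + b • nullVecDeriv x + c • nullVecDeriv2

lemma hasDerivAt_nullVec (x : ℝ) : HasDerivAt nullVec (nullVecDeriv x) x := by
  rw [hasDerivAt_pi]
  intro i
  fin_cases i
  · simpa [nullVec, nullVecDeriv] using ((hasDerivAt_id x).pow 2).const_sub (-1)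
  · simpa [nullVec, nullVecDeriv] using ((hasDerivAt_id x).pow 2).const_sub 1
  · simpa [nullVec, nullVecDeriv] using (hasDerivAt_id x).const_mul 2

lemma hasDerivAt_nullVecDeriv (x : ℝ) : HasDerivAt nullVecDeriv nullVecDeriv2 x := by
  rw [hasDerivAt_pi]
  intro i
  fin_cases i
  · simpa [nullVecDeriv, nullVecDeriv2] using (hasDerivAt_id x).const_mul (-2)
  · simpa [nullVecDeriv, nullVecDeriv2] using (hasDerivAt_id x).const_mul (-2)
  · simpa [nullVecDeriv, nullVecDeriv2] using hasDerivAt_const x (2 : ℝ)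

lemma nullFrame_zero_zero (a x : ℝ) : nullFrame a 0 0 x = a • nullVec x := by
  simp [nullFrame]

lemma nullVec_ne_zero (x : ℝ) : nullVec x ≠ 0 := by
  intro h0
  have := congrFun h0 0
  simp only [nullVec, Matrix.cons_val_zero, Pi.zero_apply] at this
  nlinarith [sq_nonneg x]

lemma ml_nullFrame_self (a b c x : ℝ) :
    ml (nullFrame a b c x) (nullFrame a b c x) = 4 * b ^ 2 - 8 * a * c := by
  simp only [ml, nullFrame, nullVec, nullVecDeriv, nullVecDeriv2, Pi.add_apply, Pi.smul_apply,
    smul_eq_mul, Matrix.cons_val_zero, Matrix.cons_val_one, Matrix.cons_val_two, Matrix.head_cons,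
    Matrix.tail_cons]
  ring

lemma hasDerivAt_nullFrame {a b c h : ℝ → ℝ} {a' b' c' h' t : ℝ} (ha : HasDerivAt a a' t)
    (hb : HasDerivAt b b' t) (hc : HasDerivAt c c' t) (hh : HasDerivAt h h' t) :
    HasDerivAt (fun s => nullFrame (a s) (b s) (c s) (h s))
      (nullFrame a' (a t * h' + b') (b t * h' + c') (h t)) t := by
  have hN := ha.smul ((hasDerivAt_nullVec (h t)).scomp t hh)
  have hT := hb.smul ((hasDerivAt_nullVecDeriv (h t)).scomp t hh)
  have hW := hc.smul_const nullVecDeriv2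
  refine ((hN.add hT).add hW).congr_deriv ?_
  simp only [nullFrame, Function.comp_apply]
  module

lemma deriv_deriv_eq_nullFrame {U : Set ℝ} (hU : IsOpen U) {γ : ℝ → Fin 3 → ℝ}
    {a b c h : ℝ → ℝ} (hγ : ∀ s ∈ U, deriv γ s = nullFrame (a s) (b s) (c s) (h s))
    {a' b' c' h' t : ℝ} (ht : t ∈ U) (ha : HasDerivAt a a' t) (hb : HasDerivAt b b' t)
    (hc : HasDerivAt c c' t) (hh : HasDerivAt h h' t) :
    deriv (deriv γ) t = nullFrame a' (a t * h' + b') (b t * h' + c') (h t) := by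
  have hγU : deriv γ =ᶠ[nhds t] fun s => nullFrame (a s) (b s) (c s) (h s) :=
    Filter.eventually_of_mem (hU.mem_nhds ht) hγ
  rw [hγU.deriv_eq, (hasDerivAt_nullFrame ha hb hc hh).deriv]

lemma linearIndependent_of_ml_self {u v : Fin 3 → ℝ} (hu : u ≠ 0) (hu₀ : ml u u = 0)
    (hv : ml v v ≠ 0) : LinearIndependent ℝ ![u, v] := by
  rw [linearIndependent_fin2]
  simp only [Matrix.cons_val_one, Matrix.cons_val_zero]
  refine ⟨fun hv₀ => hv (by simp [hv₀, ml]), fun a hau => ?_⟩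
  have ha : a ^ 2 * ml v v = 0 := by
    rw [← hu₀, ← hau]
    simp only [ml, Pi.smul_apply, smul_eq_mul]
    ring
  obtain rfl : a = 0 := by simpa [hv] using ha
  exact hu (by simpa using hau.symm)

lemma hasDerivAt_div_two_mul {k : ℝ → ℝ} {k' t : ℝ} (H : ℝ) (hk : HasDerivAt k k' t)
    (hk₀ : k t ≠ 0) : HasDerivAt (fun s => H / (2 * k s)) (-(H * k') / (2 * k t ^ 2)) t := by
  refine ((hasDerivAt_const t H).div (hk.const_mul 2) (by simpa using hk₀)).congr_deriv ?_
  field_simp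
  ring

lemma hasDerivAt_neg_mul_div_two_mul_sq {k k₁ : ℝ → ℝ} {k' k₁' t : ℝ} (H : ℝ)
    (hk : HasDerivAt k k' t) (hk₁ : HasDerivAt k₁ k₁' t) (hk₀ : k t ≠ 0) :
    HasDerivAt (fun s => -(H * k₁ s) / (2 * k s ^ 2))
      (-(H * (k₁' * k t - 2 * k₁ t * k')) / (2 * k t ^ 3)) t := by
  have hden : HasDerivAt (fun s => 2 * k s ^ 2) (2 * (2 * k t * k')) t := by
    simpa using (hk.pow 2).const_mul 2
  have hnum : HasDerivAt (fun s => -(H * k₁ s)) (-(H * k₁')) t := (hk₁.const_mul H).neg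
  refine (hnum.div hden (by simpa using hk₀)).congr_deriv ?_
  field_simp
  ring

lemma ContDiffOn.hasDerivAt_deriv {f : ℝ → ℝ} {U : Set ℝ} (hf : ContDiffOn ℝ ∞ f U)
    (hU : IsOpen U) {t : ℝ} (ht : t ∈ U) : HasDerivAt f (deriv f t) t :=
  ((hf.contDiffAt (hU.mem_nhds ht)).differentiableAt (by simp)).hasDerivAt

section

variable {U : Set ℝ} {H : ℝ} {h : ℝ → ℝ} {γ : ℝ → Fin 3 → ℝ}

lemma deriv_deriv_eq_of_deriv_eq_smul_nullVec (hU : IsOpen U) (hh : ContDiffOn ℝ ∞ h U)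
    (hh' : ∀ s ∈ U, deriv h s ≠ 0)
    (hγ : ∀ s ∈ U, deriv γ s = (H / (2 * deriv h s)) • nullVec (h s)) {t : ℝ} (ht : t ∈ U) :
    deriv (deriv γ) t =
      nullFrame (-(H * deriv (deriv h) t) / (2 * deriv h t ^ 2)) (H / 2) 0 (h t) := by
  have hk := (hh.deriv_of_isOpen hU (m := ∞) (by simp)).hasDerivAt_deriv hU ht
  have hγ₁ : ∀ s ∈ U, deriv γ s = nullFrame (H / (2 * deriv h s)) 0 0 (h s) := fun s hs =>
    (hγ s hs).trans (nullFrame_zero_zero _ _).symm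
  rw [deriv_deriv_eq_nullFrame hU hγ₁ ht (hasDerivAt_div_two_mul H hk (hh' t ht))
    (hasDerivAt_const t 0) (hasDerivAt_const t 0) (hh.hasDerivAt_deriv hU ht)]
  congr 1 <;> field_simp [hh' t ht] <;> ring

lemma deriv_deriv_deriv_eq_of_deriv_eq_smul_nullVec (hU : IsOpen U) (hh : ContDiffOn ℝ ∞ h U)
    (hh' : ∀ s ∈ U, deriv h s ≠ 0)
    (hγ : ∀ s ∈ U, deriv γ s = (H / (2 * deriv h s)) • nullVec (h s)) {t : ℝ} (ht : t ∈ U) :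
    deriv (deriv (deriv γ)) t =
      nullFrame (-(H * (deriv (deriv (deriv h)) t * deriv h t - 2 * deriv (deriv h) t ^ 2))
          / (2 * deriv h t ^ 3))
        (-(H * deriv (deriv h) t) / (2 * deriv h t)) (H * deriv h t / 2) (h t) := by
  have hk₁ := hh.deriv_of_isOpen hU (m := ∞) (by simp)
  have hk := hk₁.hasDerivAt_deriv hU ht
  have hk' := (hk₁.deriv_of_isOpen hU (m := ∞) (by simp)).hasDerivAt_deriv hU ht
  have hγ₂ : ∀ s ∈ U, deriv (deriv γ) s = _ := fun s hs =>
    deriv_deriv_eq_of_deriv_eq_smul_nullVec hU hh hh' hγ hs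
  rw [deriv_deriv_eq_nullFrame hU hγ₂ ht (hasDerivAt_neg_mul_div_two_mul_sq H hk hk' (hh' t ht))
    (hasDerivAt_const t _) (hasDerivAt_const t 0) (hh.hasDerivAt_deriv hU ht)]
  congr 1 <;> field_simp [hh' t ht] <;> ring

end

theorem stmt5_general
    (I : Set ℝ) (hIopen : IsOpen I)
    (H : ℝ) (hH : H ≠ 0)
    (h : ℝ → ℝ) (hhsm : ContDiffOn ℝ (⊤ : ℕ∞) h I)
    (hh' : ∀ s ∈ I, deriv h s ≠ 0)
    (γ : ℝ → Fin 3 → ℝ)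
    (hγ' : ∀ s ∈ I, deriv γ s =
      (H / (2 * deriv h s)) • ![-1 - h s ^ 2, 1 - h s ^ 2, 2 * h s])
    (Sh : ℝ → ℝ)
    (hShdef : ∀ s, Sh s = deriv (deriv (deriv h)) s / deriv h s
      - (3 / 2) * (deriv (deriv h) s / deriv h s) ^ 2) :
    ∀ s ∈ I,
      deriv γ s ≠ 0 ∧
      ml (deriv γ s) (deriv γ s) = 0 ∧
      ml (deriv (deriv γ) s) (deriv (deriv γ) s) = H ^ 2 ∧
      LinearIndependent ℝ ![deriv γ s, deriv (deriv γ) s] ∧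
      ml (deriv (deriv (deriv γ)) s) (deriv (deriv (deriv γ)) s)
        = 2 * H ^ 2 * Sh s := by
  intro s hs
  have hγ₁ : deriv γ s = nullFrame (H / (2 * deriv h s)) 0 0 (h s) :=
    (hγ' s hs).trans (nullFrame_zero_zero _ _).symm
  have hγ₂ := deriv_deriv_eq_of_deriv_eq_smul_nullVec hIopen hhsm hh' hγ' hs
  have hγ₃ := deriv_deriv_deriv_eq_of_deriv_eq_smul_nullVec hIopen hhsm hh' hγ' hs
  have hnull : ml (deriv γ s) (deriv γ s) = 0 := by
    rw [hγ₁, ml_nullFrame_self]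
    ring
  have hne : deriv γ s ≠ 0 := by
    rw [hγ' s hs]
    exact smul_ne_zero (div_ne_zero hH (mul_ne_zero two_ne_zero (hh' s hs))) (nullVec_ne_zero _)
  have hacc : ml (deriv (deriv γ) s) (deriv (deriv γ) s) = H ^ 2 := by
    rw [hγ₂, ml_nullFrame_self]
    ring
  refine ⟨hne, hnull, hacc, linearIndependent_of_ml_self hne hnull (by simpa [hacc] using hH), ?_⟩
  rw [hγ₃, ml_nullFrame_self, hShdef]
  field_simp
  ring

/-- the curve with `γ' = (H/(2h'))(−1−h², 1−h², 2h)` is a regular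
non-degenerate null curve with `⟨γ'',γ''⟩ = H²` and
`⟨γ''',γ'''⟩ = 2H²·S(h)`, where `S(h)` is the Schwarzian derivative. -/
theorem stmt5
    (I : Set ℝ) (hIopen : IsOpen I) (hIconn : I.OrdConnected)
    (H : ℝ) (hH : H ≠ 0)
    (h : ℝ → ℝ) (hhsm : ContDiffOn ℝ (⊤ : ℕ∞) h I)
    (hh' : ∀ s ∈ I, deriv h s ≠ 0)
    (γ : ℝ → Fin 3 → ℝ)
    (hγsm : ContDiffOn ℝ (⊤ : ℕ∞) γ I)
    (hγ' : ∀ s ∈ I, deriv γ s =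
      (H / (2 * deriv h s)) • ![-1 - h s ^ 2, 1 - h s ^ 2, 2 * h s])
    (Sh : ℝ → ℝ)
    (hShdef : ∀ s, Sh s = deriv (deriv (deriv h)) s / deriv h s
      - (3 / 2) * (deriv (deriv h) s / deriv h s) ^ 2) :
    ∀ s ∈ I,
      deriv γ s ≠ 0 ∧
      ml (deriv γ s) (deriv γ s) = 0 ∧
      ml (deriv (deriv γ) s) (deriv (deriv γ) s) = H ^ 2 ∧
      LinearIndependent ℝ ![deriv γ s, deriv (deriv γ) s] ∧
      ml (deriv (deriv (deriv γ)) s) (deriv (deriv (deriv γ)) s)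
        = 2 * H ^ 2 * Sh s :=
  stmt5_general I hIopen H hH h hhsm hh' γ hγ' Sh hShdef
end
end

section
/- Let I ⊆ ℝ be an open interval, H a nonzero real number, and κ : I → ℝ a smooth function. Then there exists a smooth curve γ : I → ℝ³ such that ⟨γ',γ'⟩ = 0, ⟨γ'',γ''⟩ = H², and ⟨γ''',γ'''⟩ = 2H³·κ hold on all of I. -/
noncomputable section

/-! If `u` and `v` solve Hill's equation `w'' = q w` and have Wronskian `W = u v' - u' v`, then
the curve with velocity `((u² + v²) / 2, (u² - v²) / 2, u v)` (the spinor parametrisation of the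
light cone of `𝕃³`) satisfies `⟨γ', γ'⟩ = 0`, `⟨γ'', γ''⟩ = W²` and `⟨γ''', γ'''⟩ = -4 q W²`.
Taking `q = -H κ / 2` and initial data with `W = H` gives the required curve.

Hill's equation is solved on all of `I` as a first-order linear system `y' = A y`, by the Picard
series `∑ yₙ` with `yₙ₊₁ s = ∫_{s₀}^{s} A t (yₙ t) dt`; on a compact subinterval where `‖A‖ ≤ M`
its terms are bounded by `‖y₀‖ (M |s - s₀|)ⁿ / n!`. -/

open Set Filter Topology intervalIntegral
open scoped ContDiff Nat Interval

theorem summable_norm_mul_pow_div_factorial {E : Type*} [NormedAddCommGroup E] (x : E) (r : ℝ) :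
    Summable fun n : ℕ => ‖x‖ * r ^ n / n ! := by
  simpa only [mul_div_assoc] using (Real.summable_pow_div_factorial r).mul_left ‖x‖

section Calculus

variable {E : Type*} [NormedAddCommGroup E] [NormedSpace ℝ E] {I : Set ℝ}

theorem Set.OrdConnected.exists_Icc_mem_nhds (hIo : IsOpen I) (hIc : I.OrdConnected)
    {s₀ s : ℝ} (hs₀ : s₀ ∈ I) (hs : s ∈ I) :
    ∃ c d, Icc c d ⊆ I ∧ s₀ ∈ Icc c d ∧ Icc c d ∈ 𝓝 s := by
  obtain ⟨c, d, hsc, hcd, hcdI⟩ := exists_Icc_mem_subset_of_mem_nhds (hIo.mem_nhds hs)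
  have hc : c ∈ I := hcdI ⟨le_rfl, hsc.1.trans hsc.2⟩
  have hd : d ∈ I := hcdI ⟨hsc.1.trans hsc.2, le_rfl⟩
  exact ⟨min c s₀, max d s₀, hIc.out (min_rec' (· ∈ I) hc hs₀) (max_rec' (· ∈ I) hd hs₀),
    ⟨min_le_right _ _, le_max_right _ _⟩,
    mem_of_superset hcd (Icc_subset_Icc (min_le_left _ _) (le_max_left _ _))⟩

theorem hasDerivAt_integral_of_continuousOn [CompleteSpace E] (hIo : IsOpen I)
    (hIc : I.OrdConnected) {g : ℝ → E} (hg : ContinuousOn g I) {s₀ s : ℝ} (hs₀ : s₀ ∈ I)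
    (hs : s ∈ I) : HasDerivAt (fun x => ∫ t in s₀..x, g t) (g s) s :=
  integral_hasDerivAt_right ((hg.mono (hIc.uIcc_subset hs₀ hs)).intervalIntegrable)
    (hg.stronglyMeasurableAtFilter hIo s hs) (hg.continuousAt (hIo.mem_nhds hs))

theorem contDiffOn_infty_of_hasDerivAt (hIo : IsOpen I) {f g : ℝ → E}
    (hf : ∀ s ∈ I, HasDerivAt f (g s) s) (hg : ContDiffOn ℝ ∞ g I) : ContDiffOn ℝ ∞ f I :=
  (contDiffOn_infty_iff_deriv_of_isOpen hIo).2
    ⟨fun s hs => (hf s hs).differentiableAt.differentiableWithinAt,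
      hg.congr fun s hs => (hf s hs).deriv⟩

end Calculus

section LinearODE

variable {E : Type*} [NormedAddCommGroup E] [NormedSpace ℝ E]
  (A : ℝ → E →L[ℝ] E) (s₀ : ℝ) (y₀ : E)

def volterraIter : ℕ → ℝ → E
  | 0 => fun _ => y₀
  | n + 1 => fun s => ∫ t in s₀..s, A t (volterraIter n t)

def volterraSeries (s : ℝ) : E := ∑' n, volterraIter A s₀ y₀ n s

variable {A s₀ y₀} {I : Set ℝ}

theorem continuousOn_volterraIter [CompleteSpace E] (hIo : IsOpen I) (hIc : I.OrdConnected)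
    (hs₀ : s₀ ∈ I) (hA : ContinuousOn A I) (n : ℕ) : ContinuousOn (volterraIter A s₀ y₀ n) I := by
  induction n with
  | zero => exact continuousOn_const
  | succ n ih =>
    exact fun s hs => (hasDerivAt_integral_of_continuousOn hIo hIc (hA.clm_apply ih) hs₀
      hs).continuousAt.continuousWithinAt

theorem norm_volterraIter_le {K : Set ℝ} (hK : K.OrdConnected) (hs₀ : s₀ ∈ K) {M : ℝ}
    (hM : ∀ t ∈ K, ‖A t‖ ≤ M) (n : ℕ) {s : ℝ} (hs : s ∈ K) :
    ‖volterraIter A s₀ y₀ n s‖ ≤ ‖y₀‖ * (M * |s - s₀|) ^ n / n ! := by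
  have hM₀ : 0 ≤ M := (norm_nonneg _).trans (hM s₀ hs₀)
  induction n generalizing s with
  | zero => simp [volterraIter]
  | succ n ih =>
    have hbound : ∀ t ∈ Ι s₀ s,
        ‖A t (volterraIter A s₀ y₀ n t)‖ ≤ ‖y₀‖ * M ^ (n + 1) / n ! * |t - s₀| ^ n := by
      intro t ht
      have htK : t ∈ K := hK.uIcc_subset hs₀ hs (uIoc_subset_uIcc ht)
      calc ‖A t (volterraIter A s₀ y₀ n t)‖ ≤ M * (‖y₀‖ * (M * |t - s₀|) ^ n / n !) :=
            (A t).le_of_opNorm_le (hM t htK) _ |>.trans (by gcongr; exact ih htK)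
        _ = _ := by rw [mul_pow]; ring
    calc ‖volterraIter A s₀ y₀ (n + 1) s‖
        ≤ ∫ t in Ι s₀ s, ‖y₀‖ * M ^ (n + 1) / n ! * |t - s₀| ^ n := by
          rw [volterraIter, norm_intervalIntegral_eq]
          exact MeasureTheory.norm_integral_le_of_norm_le
            (Continuous.integrableOn_uIoc (by fun_prop))
            ((MeasureTheory.ae_restrict_mem measurableSet_uIoc).mono hbound)
      _ = ‖y₀‖ * (M * |s - s₀|) ^ (n + 1) / (n + 1)! := by
          rw [MeasureTheory.integral_const_mul, integral_pow_abs_sub_uIoc, Nat.factorial_succ]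
          push_cast
          field_simp
          ring

theorem exists_Icc_mem_nhds_forall_norm_le (hIo : IsOpen I) (hIc : I.OrdConnected)
    (hs₀ : s₀ ∈ I) (hA : ContinuousOn A I) {s : ℝ} (hs : s ∈ I) :
    ∃ c d M, Icc c d ⊆ I ∧ s₀ ∈ Icc c d ∧ Icc c d ∈ 𝓝 s ∧ ∀ t ∈ Icc c d, ‖A t‖ ≤ M := by
  obtain ⟨c, d, hcd, hs₀cd, hnhds⟩ := hIc.exists_Icc_mem_nhds hIo hs₀ hs
  obtain ⟨M, hM⟩ := isCompact_Icc.exists_bound_of_continuousOn (hA.mono hcd)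
  exact ⟨c, d, M, hcd, hs₀cd, hnhds, hM⟩

theorem norm_volterraIter_le_of_mem_Icc {c d M : ℝ} (hs₀ : s₀ ∈ Icc c d)
    (hM : ∀ t ∈ Icc c d, ‖A t‖ ≤ M) (n : ℕ) {s : ℝ} (hs : s ∈ Icc c d) :
    ‖volterraIter A s₀ y₀ n s‖ ≤ ‖y₀‖ * (M * (d - c)) ^ n / n ! := by
  have hM₀ : 0 ≤ M := (norm_nonneg _).trans (hM s₀ hs₀)
  refine (norm_volterraIter_le ordConnected_Icc hs₀ hM n hs).trans ?_
  gcongr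
  exact Real.dist_eq s s₀ ▸ Real.dist_le_of_mem_Icc hs hs₀

theorem summable_volterraIter_of_mem_Icc [CompleteSpace E] {c d M : ℝ} (hs₀ : s₀ ∈ Icc c d)
    (hM : ∀ t ∈ Icc c d, ‖A t‖ ≤ M) {s : ℝ} (hs : s ∈ Icc c d) :
    Summable fun n => volterraIter A s₀ y₀ n s :=
  (summable_norm_mul_pow_div_factorial y₀ (M * (d - c))).of_norm_bounded
    fun n => norm_volterraIter_le_of_mem_Icc hs₀ hM n hs

theorem continuousOn_volterraSeries [CompleteSpace E] (hIo : IsOpen I) (hIc : I.OrdConnected)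
    (hs₀ : s₀ ∈ I) (hA : ContinuousOn A I) : ContinuousOn (volterraSeries A s₀ y₀) I := by
  intro s hs
  obtain ⟨c, d, M, hcd, hs₀cd, hnhds, hM⟩ :=
    exists_Icc_mem_nhds_forall_norm_le hIo hIc hs₀ hA hs
  have hcont : ContinuousOn (volterraSeries A s₀ y₀) (Icc c d) :=
    continuousOn_tsum (fun n => (continuousOn_volterraIter hIo hIc hs₀ hA n).mono hcd)
      (summable_norm_mul_pow_div_factorial y₀ (M * (d - c)))
      (fun n _ ht => norm_volterraIter_le_of_mem_Icc hs₀cd hM n ht)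
  exact (hcont.continuousAt hnhds).continuousWithinAt

theorem volterraSeries_eq_add_integral [CompleteSpace E] (hIo : IsOpen I) (hIc : I.OrdConnected)
    (hs₀ : s₀ ∈ I) (hA : ContinuousOn A I) {s : ℝ} (hs : s ∈ I) :
    volterraSeries A s₀ y₀ s = y₀ + ∫ t in s₀..s, A t (volterraSeries A s₀ y₀ t) := by
  obtain ⟨c, d, M, hcd, hs₀cd, hnhds, hM⟩ :=
    exists_Icc_mem_nhds_forall_norm_le hIo hIc hs₀ hA hs
  have hsub : Ι s₀ s ⊆ Icc c d :=
    uIoc_subset_uIcc.trans (ordConnected_Icc.uIcc_subset hs₀cd (mem_of_mem_nhds hnhds))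
  have hbound : ∀ n, ∀ t ∈ Ι s₀ s,
      ‖A t (volterraIter A s₀ y₀ n t)‖ ≤ M * (‖y₀‖ * (M * (d - c)) ^ n / n !) := fun n t ht =>
    (A t).le_of_opNorm_le (hM t (hsub ht)) _ |>.trans <|
      mul_le_mul_of_nonneg_left (norm_volterraIter_le_of_mem_Icc hs₀cd hM n (hsub ht))
        ((norm_nonneg _).trans (hM s₀ hs₀cd))
  have hsum : HasSum (fun n => volterraIter A s₀ y₀ (n + 1) s)
      (∫ t in s₀..s, A t (volterraSeries A s₀ y₀ t)) := by
    refine hasSum_integral_of_dominated_convergence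
      (fun n _ => M * (‖y₀‖ * (M * (d - c)) ^ n / n !)) (fun n => ?_)
      (fun n => .of_forall (hbound n)) (.of_forall fun _ _ =>
        (summable_norm_mul_pow_div_factorial y₀ (M * (d - c))).mul_left M)
      intervalIntegrable_const (.of_forall fun t ht => ?_)
    · exact ((hA.clm_apply (continuousOn_volterraIter hIo hIc hs₀ hA n)).mono
        (hsub.trans hcd)).aestronglyMeasurable measurableSet_uIoc
    · exact (A t).hasSum (summable_volterraIter_of_mem_Icc hs₀cd hM (hsub ht)).hasSum
  rw [volterraSeries,
    (summable_volterraIter_of_mem_Icc hs₀cd hM (mem_of_mem_nhds hnhds)).tsum_eq_zero_add,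
    hsum.tsum_eq, volterraIter]

theorem exists_hasDerivAt_clm_apply [CompleteSpace E] (hIo : IsOpen I) (hIc : I.OrdConnected)
    (hs₀ : s₀ ∈ I) (hA : ContinuousOn A I) (y₀ : E) :
    ∃ y : ℝ → E, y s₀ = y₀ ∧ ∀ s ∈ I, HasDerivAt y (A s (y s)) s := by
  refine ⟨volterraSeries A s₀ y₀, ?_, fun s hs => ?_⟩
  · simpa using volterraSeries_eq_add_integral (y₀ := y₀) hIo hIc hs₀ hA hs₀
  · have hy := continuousOn_volterraSeries (y₀ := y₀) hIo hIc hs₀ hA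
    exact ((hasDerivAt_integral_of_continuousOn hIo hIc (hA.clm_apply hy) hs₀ hs).const_add y₀
      ).congr_of_eventuallyEq (eventually_of_mem (hIo.mem_nhds hs)
        fun x hx => volterraSeries_eq_add_integral hIo hIc hs₀ hA hx)

theorem contDiffOn_of_hasDerivAt_clm_apply (hIo : IsOpen I) (hA : ContDiffOn ℝ ∞ A I)
    {y : ℝ → E} (hy : ∀ s ∈ I, HasDerivAt y (A s (y s)) s) : ContDiffOn ℝ ∞ y I := by
  refine contDiffOn_infty.2 fun n => ?_
  induction n with
  | zero => exact contDiffOn_zero.2 fun s hs => (hy s hs).continuousAt.continuousWithinAt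
  | succ n ih =>
    refine (contDiffOn_succ_iff_deriv_of_isOpen (n := n) hIo).2
      ⟨fun s hs => (hy s hs).differentiableAt.differentiableWithinAt, by simp, ?_⟩
    exact ((hA.of_le (by exact_mod_cast le_top)).clm_apply ih).congr fun s hs => (hy s hs).deriv

end LinearODE

section SecondOrder

variable {F : Type*} [NormedAddCommGroup F] [NormedSpace ℝ F] {I : Set ℝ} {s₀ : ℝ} {q : ℝ → ℝ}

def companion (r : ℝ) : F × F →L[ℝ] F × F :=
  (ContinuousLinearMap.snd ℝ F F).prod (r • ContinuousLinearMap.fst ℝ F F)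

theorem contDiffOn_companion (hq : ContDiffOn ℝ ∞ q I) :
    ContDiffOn ℝ ∞ (fun t => (companion (q t) : F × F →L[ℝ] F × F)) I :=
  (ContinuousLinearMap.prodₗᵢ (𝕜 := ℝ) (E := F × F) (F := F) (G := F) ℝ).contDiff
    |>.comp_contDiffOn (contDiffOn_const.prodMk (hq.smul contDiffOn_const))

theorem exists_hasDerivAt_hasDerivAt_smul [CompleteSpace F] (hIo : IsOpen I)
    (hIc : I.OrdConnected) (hs₀ : s₀ ∈ I) (hq : ContDiffOn ℝ ∞ q I) (a b : F) :
    ∃ u u' : ℝ → F, u s₀ = a ∧ u' s₀ = b ∧ ContDiffOn ℝ ∞ u I ∧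
      ∀ s ∈ I, HasDerivAt u (u' s) s ∧ HasDerivAt u' (q s • u s) s := by
  obtain ⟨y, hy₀, hy⟩ := exists_hasDerivAt_clm_apply hIo hIc hs₀
    (contDiffOn_companion (F := F) hq).continuousOn (a, b)
  have hysm := contDiffOn_of_hasDerivAt_clm_apply hIo (contDiffOn_companion hq) hy
  refine ⟨fun s => (y s).1, fun s => (y s).2, by simp [hy₀], by simp [hy₀], hysm.fst,
    fun s hs => ⟨?_, ?_⟩⟩
  · exact (ContinuousLinearMap.fst ℝ F F).hasFDerivAt.comp_hasDerivAt s (hy s hs)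
  · exact (ContinuousLinearMap.snd ℝ F F).hasFDerivAt.comp_hasDerivAt s (hy s hs)

theorem wronskian_eq {u u' v v' : ℝ → ℝ} (hIo : IsOpen I) (hIc : I.OrdConnected) (hs₀ : s₀ ∈ I)
    (hu : ∀ s ∈ I, HasDerivAt u (u' s) s ∧ HasDerivAt u' (q s * u s) s)
    (hv : ∀ s ∈ I, HasDerivAt v (v' s) s ∧ HasDerivAt v' (q s * v s) s) {s : ℝ} (hs : s ∈ I) :
    u s * v' s - u' s * v s = u s₀ * v' s₀ - u' s₀ * v s₀ := by
  have hW : ∀ s ∈ I, HasDerivAt (fun x => u x * v' x - u' x * v x) 0 s := fun s hs =>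
    (((hu s hs).1.mul (hv s hs).2).sub ((hu s hs).2.mul (hv s hs).1)).congr_deriv (by ring)
  exact hIo.is_const_of_deriv_eq_zero hIc.isPreconnected
    (fun s hs => (hW s hs).differentiableAt.differentiableWithinAt)
    (fun s hs => (hW s hs).deriv) hs hs₀

end SecondOrder

section SpinorCurve

variable {I : Set ℝ} {s₀ : ℝ} {q u u' v v' : ℝ → ℝ}

def nullOfSpinor (a b : ℝ) : Fin 3 → ℝ := ![(a ^ 2 + b ^ 2) / 2, (a ^ 2 - b ^ 2) / 2, a * b]

def spinorCurve (s₀ : ℝ) (u v : ℝ → ℝ) (s : ℝ) : Fin 3 → ℝ :=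
  ∫ t in s₀..s, nullOfSpinor (u t) (v t)

theorem hasDerivAt_vecCons₃ {f g h : ℝ → ℝ} {f' g' h' s : ℝ} (hf : HasDerivAt f f' s)
    (hg : HasDerivAt g g' s) (hh : HasDerivAt h h' s) :
    HasDerivAt (fun x => ![f x, g x, h x]) ![f', g', h'] s := by
  refine hasDerivAt_pi.2 fun i => ?_
  fin_cases i <;> assumption

theorem contDiff_nullOfSpinor : ContDiff ℝ ∞ fun p : ℝ × ℝ => nullOfSpinor p.1 p.2 := by
  refine contDiff_pi.2 fun i => ?_
  fin_cases i <;> simp only [nullOfSpinor, Fin.zero_eta, Fin.mk_one, Fin.reduceFinMk,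
    Matrix.cons_val_zero, Matrix.cons_val_one, Matrix.cons_val] <;> fun_prop

theorem hasDerivAt_spinorCurve (hIo : IsOpen I) (hIc : I.OrdConnected) (hs₀ : s₀ ∈ I)
    (hu : ContinuousOn u I) (hv : ContinuousOn v I) {s : ℝ} (hs : s ∈ I) :
    HasDerivAt (spinorCurve s₀ u v) (nullOfSpinor (u s) (v s)) s :=
  hasDerivAt_integral_of_continuousOn hIo hIc
    (contDiff_nullOfSpinor.continuous.comp_continuousOn (hu.prodMk hv)) hs₀ hs

theorem contDiffOn_spinorCurve (hIo : IsOpen I) (hIc : I.OrdConnected) (hs₀ : s₀ ∈ I)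
    (hu : ContDiffOn ℝ ∞ u I) (hv : ContDiffOn ℝ ∞ v I) :
    ContDiffOn ℝ ∞ (spinorCurve s₀ u v) I :=
  contDiffOn_infty_of_hasDerivAt hIo
    (fun _ hs => hasDerivAt_spinorCurve hIo hIc hs₀ hu.continuousOn hv.continuousOn hs)
    (contDiff_nullOfSpinor.comp_contDiffOn (hu.prodMk hv))

theorem ml_deriv_spinorCurve (hIo : IsOpen I) (hIc : I.OrdConnected) (hs₀ : s₀ ∈ I)
    (hu : ∀ s ∈ I, HasDerivAt u (u' s) s ∧ HasDerivAt u' (q s * u s) s)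
    (hv : ∀ s ∈ I, HasDerivAt v (v' s) s ∧ HasDerivAt v' (q s * v s) s) {s : ℝ} (hs : s ∈ I) :
    let γ := spinorCurve s₀ u v
    ml (deriv γ s) (deriv γ s) = 0 ∧
      ml (deriv (deriv γ) s) (deriv (deriv γ) s) = (u s * v' s - u' s * v s) ^ 2 ∧
      ml (deriv (deriv (deriv γ)) s) (deriv (deriv (deriv γ)) s)
        = -4 * q s * (u s * v' s - u' s * v s) ^ 2 := by
  intro γ
  have hγ₁ : EqOn (deriv γ) (fun s => nullOfSpinor (u s) (v s)) I := fun s hs =>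
    (hasDerivAt_spinorCurve hIo hIc hs₀
      (fun s hs => (hu s hs).1.continuousAt.continuousWithinAt)
      (fun s hs => (hv s hs).1.continuousAt.continuousWithinAt) hs).deriv
  have hγ₂ : EqOn (deriv (deriv γ)) (fun s =>
      ![u s * u' s + v s * v' s, u s * u' s - v s * v' s, u' s * v s + u s * v' s]) I :=
    fun s hs => (hγ₁.deriv hIo hs).trans <| HasDerivAt.deriv <| by
      obtain ⟨⟨hu₁, -⟩, ⟨hv₁, -⟩⟩ := And.intro (hu s hs) (hv s hs)
      exact hasDerivAt_vecCons₃
        ((((hu₁.pow 2).add (hv₁.pow 2)).div_const 2).congr_deriv (by ring))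
        ((((hu₁.pow 2).sub (hv₁.pow 2)).div_const 2).congr_deriv (by ring)) (hu₁.mul hv₁)
  have hγ₃ : EqOn (deriv (deriv (deriv γ))) (fun s =>
      ![u' s ^ 2 + q s * u s ^ 2 + v' s ^ 2 + q s * v s ^ 2,
        u' s ^ 2 + q s * u s ^ 2 - v' s ^ 2 - q s * v s ^ 2,
        2 * (u' s * v' s) + 2 * (q s * u s * v s)]) I :=
    fun s hs => (hγ₂.deriv hIo hs).trans <| HasDerivAt.deriv <| by
      obtain ⟨⟨hu₁, hu₂⟩, ⟨hv₁, hv₂⟩⟩ := And.intro (hu s hs) (hv s hs)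
      exact hasDerivAt_vecCons₃ (((hu₁.mul hu₂).add (hv₁.mul hv₂)).congr_deriv (by ring))
        (((hu₁.mul hu₂).sub (hv₁.mul hv₂)).congr_deriv (by ring))
        (((hu₂.mul hv₁).add (hu₁.mul hv₂)).congr_deriv (by ring))
  rw [hγ₁ hs, hγ₂ hs, hγ₃ hs]
  simp only [ml, nullOfSpinor, Matrix.cons_val_zero, Matrix.cons_val_one, Matrix.cons_val]
  refine ⟨by ring, by ring, by ring⟩

end SpinorCurve

theorem stmt6_general
    (I : Set ℝ) (hIopen : IsOpen I) (hIconn : I.OrdConnected)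
    (H : ℝ)
    (κ : ℝ → ℝ) (hκsm : ContDiffOn ℝ (⊤ : ℕ∞) κ I) :
    ∃ γ : ℝ → Fin 3 → ℝ,
      ContDiffOn ℝ (⊤ : ℕ∞) γ I ∧
      ∀ s ∈ I,
        ml (deriv γ s) (deriv γ s) = 0 ∧
        ml (deriv (deriv γ) s) (deriv (deriv γ) s) = H ^ 2 ∧
        ml (deriv (deriv (deriv γ)) s) (deriv (deriv (deriv γ)) s)
          = 2 * H ^ 3 * κ s := by
  rcases I.eq_empty_or_nonempty with rfl | ⟨s₀, hs₀⟩
  · exact ⟨0, contDiffOn_empty, by simp⟩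
  have hq : ContDiffOn ℝ ∞ (fun s => -(H / 2) * κ s) I := contDiffOn_const.mul hκsm
  obtain ⟨u, u', hu₀, hu'₀, husm, hu⟩ :=
    exists_hasDerivAt_hasDerivAt_smul hIopen hIconn hs₀ hq (1 : ℝ) 0
  obtain ⟨v, v', hv₀, hv'₀, hvsm, hv⟩ :=
    exists_hasDerivAt_hasDerivAt_smul hIopen hIconn hs₀ hq (0 : ℝ) H
  refine ⟨spinorCurve s₀ u v, contDiffOn_spinorCurve hIopen hIconn hs₀ husm hvsm,
    fun s hs => ?_⟩
  have hW : u s * v' s - u' s * v s = H := by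
    rw [wronskian_eq hIopen hIconn hs₀ hu hv hs, hu₀, hu'₀, hv₀, hv'₀]; ring
  obtain ⟨h₁, h₂, h₃⟩ := ml_deriv_spinorCurve hIopen hIconn hs₀ hu hv hs
  exact ⟨h₁, by rw [h₂, hW], by rw [h₃, hW]; ring⟩

/-- existence part of the fundamental theorem for non-degenerate
null curves: a null curve with prescribed lightlike curvature `κ` exists. -/
theorem stmt6
    (I : Set ℝ) (hIopen : IsOpen I) (hIconn : I.OrdConnected)
    (H : ℝ) (hH : H ≠ 0)
    (κ : ℝ → ℝ) (hκsm : ContDiffOn ℝ (⊤ : ℕ∞) κ I) :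
    ∃ γ : ℝ → Fin 3 → ℝ,
      ContDiffOn ℝ (⊤ : ℕ∞) γ I ∧
      ∀ s ∈ I,
        ml (deriv γ s) (deriv γ s) = 0 ∧
        ml (deriv (deriv γ) s) (deriv (deriv γ) s) = H ^ 2 ∧
        ml (deriv (deriv (deriv γ)) s) (deriv (deriv (deriv γ)) s)
          = 2 * H ^ 3 * κ s :=
  stmt6_general I hIopen hIconn H κ hκsm
end
end

section
/- Let I ⊆ ℝ be an open interval, H a nonzero real number, and h : I → ℝ a smooth function with h'(s) ≠ 0 for all s ∈ I. Define B := −(H/(2h'))·(−1 − h², 1 − h², 2h), C := (1/H)·B', and A := (S(h)/H²)·B + (1/H²)·B'', where S(h) is the Schwarzian derivative of h. Then (A,B,C) satisfies the null frame conditions ⟨A,A⟩ = ⟨B,B⟩ = 0, ⟨A,B⟩ = −1, ⟨A,C⟩ = ⟨B,C⟩ = 0, ⟨C,C⟩ = 1, C = A × B, and the Frenet–Serret equations A' = −(S(h)/H)·C, B' = H·C, C' = H·A − (S(h)/H)·B hold on I. -/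
noncomputable section

/-!
Put `N(x) = (-1 - x², 1 - x², 2x)`, a parabola in the light cone, so that
`B = -(H / 2h') • N(h)`. Since `N''' = 0`, the vectors `N, N', N''` form a frame in which `ml` has
the constant Gram matrix `[[0, 0, -4], [0, 4, 0], [-4, 0, 0]]`, and `N × N' = 2N`,
`N × N'' = 2N'`, `N' × N'' = 2N''`. Differentiating `a N(h) + b N'(h) + c N''(h)` only changes the
coefficients, to `(a', b' + a h', c' + b h')`. Hence `B`, `C` and `A` have explicit coefficients in
this frame, and every identity becomes a rational identity in `h'`, `h''`, `h'''`. The Schwarzian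
cancels in the coefficients of `A`, which involve only `h'` and `h''`; so `A'` needs no fourth
derivative of `h`.
-/

open Topology

theorem ContDiffOn.hasDerivAt_iterate_deriv {f : ℝ → ℝ} {I : Set ℝ} (hI : IsOpen I)
    (hf : ContDiffOn ℝ (⊤ : ℕ∞) f I) (n : ℕ) {x : ℝ} (hx : x ∈ I) :
    HasDerivAt (deriv^[n] f) (deriv^[n + 1] f x) x := by
  have hfn : ContDiffOn ℝ (⊤ : ℕ∞) (deriv^[n] f) I := by
    induction n with
    | zero => exact hf
    | succ n ih =>
      rw [Function.iterate_succ_apply']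
      exact ih.deriv_of_isOpen hI le_rfl
  rw [Function.iterate_succ_apply']
  exact (hfn.differentiableOn (by simp)).hasDerivAt (hI.mem_nhds hx)

/-- `a • N x + b • N' x + c • N'' x` for the null parabola
`N x = ![-1 - x ^ 2, 1 - x ^ 2, 2 * x]`. -/
def nullComb (x a b c : ℝ) : Fin 3 → ℝ :=
  ![a * (-1 - x ^ 2) - 2 * b * x - 2 * c, a * (1 - x ^ 2) - 2 * b * x - 2 * c, 2 * a * x + 2 * b]

theorem ml_nullComb (x a b c a' b' c' : ℝ) :
    ml (nullComb x a b c) (nullComb x a' b' c') = 4 * (b * b') - 4 * (a * c' + c * a') := by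
  simp only [ml, nullComb, Matrix.cons_val_zero, Matrix.cons_val_one, Matrix.cons_val_two,
    Matrix.head_cons, Matrix.tail_cons]
  ring

theorem lcross_nullComb (x a b c a' b' c' : ℝ) :
    lcross (nullComb x a b c) (nullComb x a' b' c') =
      nullComb x (2 * (a * b' - b * a')) (2 * (a * c' - c * a')) (2 * (b * c' - c * b')) := by
  ext i
  fin_cases i <;>
    simp only [lcross, nullComb, Fin.zero_eta, Fin.mk_one, Fin.reduceFinMk, Fin.isValue,
      Matrix.cons_val_zero, Matrix.cons_val_one, Matrix.cons_val] <;>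
    ring

theorem smul_nullComb (r x a b c : ℝ) :
    r • nullComb x a b c = nullComb x (r * a) (r * b) (r * c) := by
  ext i
  fin_cases i <;>
    simp only [nullComb, Pi.smul_apply, smul_eq_mul, Fin.zero_eta, Fin.mk_one, Fin.reduceFinMk,
      Fin.isValue, Matrix.cons_val_zero, Matrix.cons_val_one, Matrix.cons_val] <;>
    ring

theorem nullComb_add_nullComb (x a b c a' b' c' : ℝ) :
    nullComb x a b c + nullComb x a' b' c' = nullComb x (a + a') (b + b') (c + c') := by
  ext i
  fin_cases i <;>
    simp only [nullComb, Pi.add_apply, Fin.zero_eta, Fin.mk_one, Fin.reduceFinMk, Fin.isValue,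
      Matrix.cons_val_zero, Matrix.cons_val_one, Matrix.cons_val] <;>
    ring

theorem nullComb_zero_zero (x a : ℝ) :
    nullComb x a 0 0 = a • ![-1 - x ^ 2, 1 - x ^ 2, 2 * x] := by
  ext i
  fin_cases i <;>
    simp only [nullComb, Pi.smul_apply, smul_eq_mul, Fin.zero_eta, Fin.mk_one, Fin.reduceFinMk,
      Fin.isValue, Matrix.cons_val_zero, Matrix.cons_val_one, Matrix.cons_val] <;>
    ring

theorem hasDerivAt_nullComb {f a b c : ℝ → ℝ} {f' a' b' c' s : ℝ} (hf : HasDerivAt f f' s)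
    (ha : HasDerivAt a a' s) (hb : HasDerivAt b b' s) (hc : HasDerivAt c c' s) :
    HasDerivAt (fun u => nullComb (f u) (a u) (b u) (c u))
      (nullComb (f s) a' (b' + a s * f') (c' + b s * f')) s := by
  have hN₀ := (ha.mul ((hasDerivAt_const s (-1)).sub (hf.pow 2))).sub
    ((hb.const_mul 2).mul hf) |>.sub (hc.const_mul 2)
  have hN₁ := (ha.mul ((hasDerivAt_const s 1).sub (hf.pow 2))).sub
    ((hb.const_mul 2).mul hf) |>.sub (hc.const_mul 2)
  have hN₂ := ((ha.const_mul 2).mul hf).add (hb.const_mul 2)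
  refine hasDerivAt_pi.2 fun i => ?_
  fin_cases i <;>
    [refine hN₀.congr_deriv ?_; refine hN₁.congr_deriv ?_; refine hN₂.congr_deriv ?_] <;>
    simp only [nullComb, Pi.sub_apply, Pi.pow_apply, Nat.cast_ofNat, Nat.add_one_sub_one, pow_one,
      Fin.zero_eta, Fin.mk_one, Fin.reduceFinMk, Fin.isValue, Matrix.cons_val_zero,
      Matrix.cons_val_one, Matrix.cons_val] <;>
    ring

def schwarzian (h : ℝ → ℝ) (s : ℝ) : ℝ :=
  deriv (deriv (deriv h)) s / deriv h s - (3 / 2) * (deriv (deriv h) s / deriv h s) ^ 2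

section NullFrame

variable (H : ℝ) (h : ℝ → ℝ)

def nullFrameB (s : ℝ) : Fin 3 → ℝ :=
  nullComb (h s) (-(H / (2 * deriv h s))) 0 0

def nullFrameC (s : ℝ) : Fin 3 → ℝ :=
  nullComb (h s) (deriv (deriv h) s / (2 * deriv h s ^ 2)) (-1 / 2) 0

def nullFrameA (s : ℝ) : Fin 3 → ℝ :=
  nullComb (h s) (-deriv (deriv h) s ^ 2 / (4 * H * deriv h s ^ 3))
    (deriv (deriv h) s / (2 * H * deriv h s)) (-deriv h s / (2 * H))

variable {H h} {s : ℝ}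

theorem hasDerivAt_nullFrameB (h₁ : HasDerivAt h (deriv h s) s)
    (h₂ : HasDerivAt (deriv h) (deriv (deriv h) s) s) (hp : deriv h s ≠ 0) :
    HasDerivAt (nullFrameB H h) (H • nullFrameC h s) s := by
  have hcoeff : HasDerivAt (fun u => -(H / (2 * deriv h u))) _ s :=
    ((hasDerivAt_const s H).div (h₂.const_mul 2) (mul_ne_zero two_ne_zero hp)).neg
  refine (hasDerivAt_nullComb h₁ hcoeff (hasDerivAt_const s 0) (hasDerivAt_const s 0)).congr_deriv
    ?_
  rw [nullFrameC, smul_nullComb]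
  congr 1 <;> field_simp <;> ring

theorem hasDerivAt_nullFrameC (hH : H ≠ 0) (h₁ : HasDerivAt h (deriv h s) s)
    (h₂ : HasDerivAt (deriv h) (deriv (deriv h) s) s)
    (h₃ : HasDerivAt (deriv (deriv h)) (deriv (deriv (deriv h)) s) s) (hp : deriv h s ≠ 0) :
    HasDerivAt (nullFrameC h)
      (H • nullFrameA H h s + (-(schwarzian h s / H)) • nullFrameB H h s) s := by
  have hcoeff : HasDerivAt (fun u => deriv (deriv h) u / (2 * deriv h u ^ 2)) _ s :=
    h₃.div ((h₂.pow 2).const_mul 2) (mul_ne_zero two_ne_zero (pow_ne_zero 2 hp))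
  refine (hasDerivAt_nullComb h₁ hcoeff (hasDerivAt_const s (-1 / 2))
    (hasDerivAt_const s 0)).congr_deriv ?_
  rw [nullFrameA, nullFrameB, smul_nullComb, smul_nullComb, nullComb_add_nullComb, schwarzian]
  congr 1 <;> field_simp <;> ring

theorem hasDerivAt_nullFrameA (hH : H ≠ 0) (h₁ : HasDerivAt h (deriv h s) s)
    (h₂ : HasDerivAt (deriv h) (deriv (deriv h) s) s)
    (h₃ : HasDerivAt (deriv (deriv h)) (deriv (deriv (deriv h)) s) s) (hp : deriv h s ≠ 0) :
    HasDerivAt (nullFrameA H h) ((-(schwarzian h s / H)) • nullFrameC h s) s := by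
  have ha : HasDerivAt (fun u => -deriv (deriv h) u ^ 2 / (4 * H * deriv h u ^ 3)) _ s :=
    (h₃.pow 2).neg.div ((h₂.pow 3).const_mul (4 * H))
      (mul_ne_zero (by positivity) (pow_ne_zero 3 hp))
  have hb : HasDerivAt (fun u => deriv (deriv h) u / (2 * H * deriv h u)) _ s :=
    h₃.div (h₂.const_mul (2 * H)) (mul_ne_zero (by positivity) hp)
  have hc : HasDerivAt (fun u => -deriv h u / (2 * H)) _ s := h₂.neg.div_const (2 * H)
  simp only [Pi.neg_apply, Pi.pow_apply] at ha
  refine (hasDerivAt_nullComb h₁ ha hb hc).congr_deriv ?_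
  rw [nullFrameC, smul_nullComb, schwarzian]
  congr 1 <;> field_simp <;> ring

end NullFrame

section NullFrameConditions

variable {H : ℝ} {h : ℝ → ℝ} {s : ℝ}

theorem ml_nullFrameA_self (hH : H ≠ 0) (hp : deriv h s ≠ 0) :
    ml (nullFrameA H h s) (nullFrameA H h s) = 0 := by
  rw [nullFrameA, ml_nullComb]; field_simp; ring

theorem ml_nullFrameB_self : ml (nullFrameB H h s) (nullFrameB H h s) = 0 := by
  rw [nullFrameB, ml_nullComb]; ring

theorem ml_nullFrameA_nullFrameB (hH : H ≠ 0) (hp : deriv h s ≠ 0) :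
    ml (nullFrameA H h s) (nullFrameB H h s) = -1 := by
  rw [nullFrameA, nullFrameB, ml_nullComb]; field_simp; ring

theorem ml_nullFrameA_nullFrameC (hH : H ≠ 0) (hp : deriv h s ≠ 0) :
    ml (nullFrameA H h s) (nullFrameC h s) = 0 := by
  rw [nullFrameA, nullFrameC, ml_nullComb]; field_simp; ring

theorem ml_nullFrameB_nullFrameC : ml (nullFrameB H h s) (nullFrameC h s) = 0 := by
  rw [nullFrameB, nullFrameC, ml_nullComb]; ring

theorem ml_nullFrameC_self : ml (nullFrameC h s) (nullFrameC h s) = 1 := by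
  rw [nullFrameC, ml_nullComb]; ring

theorem lcross_nullFrameA_nullFrameB (hH : H ≠ 0) (hp : deriv h s ≠ 0) :
    lcross (nullFrameA H h s) (nullFrameB H h s) = nullFrameC h s := by
  rw [nullFrameA, nullFrameB, nullFrameC, lcross_nullComb]
  congr 1 <;> field_simp <;> ring

end NullFrameConditions

theorem stmt7_general
    (I : Set ℝ) (hIopen : IsOpen I)
    (H : ℝ) (hH : H ≠ 0)
    (h : ℝ → ℝ) (hhsm : ContDiffOn ℝ (⊤ : ℕ∞) h I)
    (hh' : ∀ s ∈ I, deriv h s ≠ 0)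
    (Sh : ℝ → ℝ)
    (hShdef : ∀ s, Sh s = deriv (deriv (deriv h)) s / deriv h s
      - (3 / 2) * (deriv (deriv h) s / deriv h s) ^ 2)
    (A B C : ℝ → Fin 3 → ℝ)
    (hBdef : ∀ s, B s =
      (-(H / (2 * deriv h s))) • ![-1 - h s ^ 2, 1 - h s ^ 2, 2 * h s])
    (hCdef : ∀ s, C s = (1 / H) • deriv B s)
    (hAdef : ∀ s, A s = (Sh s / H ^ 2) • B s + (1 / H ^ 2) • deriv (deriv B) s) :
    ∀ s ∈ I,
      ml (A s) (A s) = 0 ∧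
      ml (B s) (B s) = 0 ∧
      ml (A s) (B s) = -1 ∧
      ml (A s) (C s) = 0 ∧
      ml (B s) (C s) = 0 ∧
      ml (C s) (C s) = 1 ∧
      C s = lcross (A s) (B s) ∧
      deriv A s = (-(Sh s / H)) • C s ∧
      deriv B s = H • C s ∧
      deriv C s = H • A s + (-(Sh s / H)) • B s := by
  have hS : Sh = schwarzian h := funext hShdef
  have hB : B = nullFrameB H h := funext fun s => by rw [hBdef, nullFrameB, nullComb_zero_zero]
  have hd : ∀ s ∈ I, HasDerivAt h (deriv h s) s ∧
      HasDerivAt (deriv h) (deriv (deriv h) s) s ∧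
      HasDerivAt (deriv (deriv h)) (deriv (deriv (deriv h)) s) s := fun s hs =>
    ⟨hhsm.hasDerivAt_iterate_deriv hIopen 0 hs, hhsm.hasDerivAt_iterate_deriv hIopen 1 hs,
      hhsm.hasDerivAt_iterate_deriv hIopen 2 hs⟩
  have hB' : ∀ s ∈ I, HasDerivAt B (H • nullFrameC h s) s := fun s hs =>
    hB ▸ hasDerivAt_nullFrameB (hd s hs).1 (hd s hs).2.1 (hh' s hs)
  have hC' : ∀ s ∈ I, HasDerivAt (nullFrameC h)
      (H • nullFrameA H h s + (-(schwarzian h s / H)) • nullFrameB H h s) s := fun s hs =>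
    hasDerivAt_nullFrameC hH (hd s hs).1 (hd s hs).2.1 (hd s hs).2.2 (hh' s hs)
  have hC : ∀ s ∈ I, C s = nullFrameC h s := fun s hs => by
    rw [hCdef, (hB' s hs).deriv, smul_smul, one_div_mul_cancel hH, one_smul]
  have hA : ∀ s ∈ I, A s = nullFrameA H h s := fun s hs => by
    have hdB : deriv B =ᶠ[𝓝 s] H • nullFrameC h := by
      filter_upwards [hIopen.mem_nhds hs] with u hu using (hB' u hu).deriv
    rw [hAdef, hdB.deriv_eq, deriv_const_smul_field, (hC' s hs).deriv, hS, hB]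
    match_scalars
    · field_simp
      ring
    · field_simp
  intro s hs
  have hp := hh' s hs
  have hAe : A =ᶠ[𝓝 s] nullFrameA H h := by
    filter_upwards [hIopen.mem_nhds hs] with u hu using hA u hu
  have hCe : C =ᶠ[𝓝 s] nullFrameC h := by
    filter_upwards [hIopen.mem_nhds hs] with u hu using hC u hu
  rw [hAe.deriv_eq, hCe.deriv_eq, (hB' s hs).deriv, (hC' s hs).deriv, hA s hs, hC s hs, hB, hS,
    (hasDerivAt_nullFrameA hH (hd s hs).1 (hd s hs).2.1 (hd s hs).2.2 hp).deriv]
  exact ⟨ml_nullFrameA_self hH hp, ml_nullFrameB_self, ml_nullFrameA_nullFrameB hH hp,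
    ml_nullFrameA_nullFrameC hH hp, ml_nullFrameB_nullFrameC, ml_nullFrameC_self,
    (lcross_nullFrameA_nullFrameB hH hp).symm, rfl, rfl, rfl⟩

/-- the frame `(A,B,C)` built from a function `h` with `h' ≠ 0`
is a null frame satisfying the B-scroll Frenet–Serret equations with
curvature `κ₂ = −S(h)/H`. -/
theorem stmt7
    (I : Set ℝ) (hIopen : IsOpen I) (hIconn : I.OrdConnected)
    (H : ℝ) (hH : H ≠ 0)
    (h : ℝ → ℝ) (hhsm : ContDiffOn ℝ (⊤ : ℕ∞) h I)
    (hh' : ∀ s ∈ I, deriv h s ≠ 0)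
    (Sh : ℝ → ℝ)
    (hShdef : ∀ s, Sh s = deriv (deriv (deriv h)) s / deriv h s
      - (3 / 2) * (deriv (deriv h) s / deriv h s) ^ 2)
    (A B C : ℝ → Fin 3 → ℝ)
    (hBdef : ∀ s, B s =
      (-(H / (2 * deriv h s))) • ![-1 - h s ^ 2, 1 - h s ^ 2, 2 * h s])
    (hCdef : ∀ s, C s = (1 / H) • deriv B s)
    (hAdef : ∀ s, A s = (Sh s / H ^ 2) • B s + (1 / H ^ 2) • deriv (deriv B) s) :
    ∀ s ∈ I,
      ml (A s) (A s) = 0 ∧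
      ml (B s) (B s) = 0 ∧
      ml (A s) (B s) = -1 ∧
      ml (A s) (C s) = 0 ∧
      ml (B s) (C s) = 0 ∧
      ml (C s) (C s) = 1 ∧
      C s = lcross (A s) (B s) ∧
      deriv A s = (-(Sh s / H)) • C s ∧
      deriv B s = H • C s ∧
      deriv C s = H • A s + (-(Sh s / H)) • B s :=
  stmt7_general I hIopen H hH h hhsm hh' Sh hShdef A B C hBdef hCdef hAdef
end
end

section
/- Let I ⊆ ℝ be an open interval, H a nonzero real number, and h : I → ℝ a smooth function with h'(s) ≠ 0 for all s ∈ I. Define B := −(H/(2h'))·(−1 − h², 1 − h², 2h). Then on all of I one has ⟨B,B⟩ = 0, ⟨B',B'⟩ = H², H·det(B, B', B'') > 0, and ⟨B'',B''⟩ = 2H²·S(h), so that −⟨B'',B''⟩/(2H³) = −S(h)/H. -/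
/-!
Write `B = c • w(h)` with `c = -H / (2h')` and `w(x) = (-1 - x², 1 - x², 2x)`, a null curve in `𝕃³`.
The frame `w, w', w''` has constant Gram data: `⟨w,w⟩ = ⟨w,w'⟩ = ⟨w',w''⟩ = ⟨w'',w''⟩ = 0`,
`⟨w',w'⟩ = 4`, `⟨w,w''⟩ = -4` and `det(w,w',w'') = -8`. Since `c h' = -H/2` is constant,
`B' = c' w - (H/2) w'` and `B'' = c'' w + c' h' w' - (H h'/2) w''`, so every claim becomes a scalar
identity in `c, c', c''`, that is, in the derivatives of `h`.
-/

noncomputable section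

open Topology

theorem HasDerivAt.smul_comp {E : Type*} [NormedAddCommGroup E] [NormedSpace ℝ E]
    {c h : ℝ → ℝ} {F : ℝ → E} {c' h' t : ℝ} {F' : E}
    (hc : HasDerivAt c c' t) (hh : HasDerivAt h h' t) (hF : HasDerivAt F F' (h t)) :
    HasDerivAt (fun t ↦ c t • F (h t)) (c' • F (h t) + (c t * h') • F') t := by
  refine (hc.smul (hF.scomp t hh)).congr_deriv ?_
  rw [mul_smul, add_comm]
  rfl

def nullLift (x : ℝ) : Fin 3 → ℝ := ![-1 - x ^ 2, 1 - x ^ 2, 2 * x]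

def nullLiftDeriv (x : ℝ) : Fin 3 → ℝ := ![-2 * x, -2 * x, 2]

def nullLiftDeriv2 : Fin 3 → ℝ := ![-2, -2, 0]

theorem hasDerivAt_nullLift (x : ℝ) : HasDerivAt nullLift (nullLiftDeriv x) x := by
  refine hasDerivAt_pi.2 fun i ↦ ?_
  fin_cases i
  · simpa [nullLift, nullLiftDeriv] using ((hasDerivAt_pow 2 x).const_sub (-1))
  · simpa [nullLift, nullLiftDeriv] using ((hasDerivAt_pow 2 x).const_sub 1)
  · simpa [nullLift, nullLiftDeriv] using ((hasDerivAt_id x).const_mul 2)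

theorem hasDerivAt_nullLiftDeriv (x : ℝ) : HasDerivAt nullLiftDeriv nullLiftDeriv2 x := by
  refine hasDerivAt_pi.2 fun i ↦ ?_
  fin_cases i
  · simpa [nullLiftDeriv, nullLiftDeriv2] using ((hasDerivAt_id x).const_mul (-2))
  · simpa [nullLiftDeriv, nullLiftDeriv2] using ((hasDerivAt_id x).const_mul (-2))
  · simpa [nullLiftDeriv, nullLiftDeriv2] using hasDerivAt_const x (2 : ℝ)

theorem ml_smul_nullLift_self (a x : ℝ) : ml (a • nullLift x) (a • nullLift x) = 0 := by
  simp only [ml, nullLift, Pi.smul_apply, smul_eq_mul,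
    Matrix.cons_val_zero, Matrix.cons_val_one, Matrix.cons_val_two, Matrix.head_cons,
    Matrix.tail_cons]
  ring

theorem ml_self_nullLift_nullLiftDeriv_comb (a b x : ℝ) :
    ml (a • nullLift x + b • nullLiftDeriv x) (a • nullLift x + b • nullLiftDeriv x) =
      4 * b ^ 2 := by
  simp only [ml, nullLift, nullLiftDeriv, Pi.add_apply, Pi.smul_apply, smul_eq_mul,
    Matrix.cons_val_zero, Matrix.cons_val_one, Matrix.cons_val_two, Matrix.head_cons,
    Matrix.tail_cons]
  ring

theorem ml_self_nullLift_frame_comb (p q r x : ℝ) :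
    ml (p • nullLift x + q • nullLiftDeriv x + r • nullLiftDeriv2)
      (p • nullLift x + q • nullLiftDeriv x + r • nullLiftDeriv2) = 4 * q ^ 2 - 8 * p * r := by
  simp only [ml, nullLift, nullLiftDeriv, nullLiftDeriv2, Pi.add_apply, Pi.smul_apply, smul_eq_mul,
    Matrix.cons_val_zero, Matrix.cons_val_one, Matrix.cons_val_two, Matrix.head_cons,
    Matrix.tail_cons]
  ring

theorem det3_nullLift_frame_comb (a b c p q r x : ℝ) :
    det3 (a • nullLift x) (b • nullLift x + c • nullLiftDeriv x)
      (p • nullLift x + q • nullLiftDeriv x + r • nullLiftDeriv2) = -8 * a * c * r := by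
  simp only [det3, nullLift, nullLiftDeriv, nullLiftDeriv2, Pi.add_apply, Pi.smul_apply,
    smul_eq_mul, Matrix.cons_val_zero, Matrix.cons_val_one, Matrix.cons_val_two,
    Matrix.head_cons, Matrix.tail_cons]
  ring

theorem ContDiffOn.differentiableAt_deriv_deriv {f : ℝ → ℝ} {I : Set ℝ} {t : ℝ}
    (hf : ContDiffOn ℝ 3 f I) (hI : IsOpen I) (ht : t ∈ I) :
    DifferentiableAt ℝ f t ∧ DifferentiableAt ℝ (deriv f) t ∧
      DifferentiableAt ℝ (deriv (deriv f)) t := by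
  have hf' : ContDiffOn ℝ 2 (deriv f) I := hf.deriv_of_isOpen hI (by norm_num)
  have hf'' : ContDiffOn ℝ 1 (deriv (deriv f)) I := hf'.deriv_of_isOpen hI (by norm_num)
  exact ⟨(hf.contDiffAt (hI.mem_nhds ht)).differentiableAt (by norm_num),
    (hf'.contDiffAt (hI.mem_nhds ht)).differentiableAt (by norm_num),
    (hf''.contDiffAt (hI.mem_nhds ht)).differentiableAt (by norm_num)⟩

section NullCurve

variable {H : ℝ} {h : ℝ → ℝ} {s : ℝ}

def nullCurve (H : ℝ) (h : ℝ → ℝ) (t : ℝ) : Fin 3 → ℝ :=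
  -(H / (2 * deriv h t)) • nullLift (h t)

def nullCurveVelocity (H : ℝ) (h : ℝ → ℝ) (t : ℝ) : Fin 3 → ℝ :=
  (H * deriv (deriv h) t / (2 * deriv h t ^ 2)) • nullLift (h t)
    + (-(H / 2)) • nullLiftDeriv (h t)

theorem hasDerivAt_nullCurve (h₁ : DifferentiableAt ℝ h s)
    (h₂ : DifferentiableAt ℝ (deriv h) s) (hs : deriv h s ≠ 0) :
    HasDerivAt (nullCurve H h) (nullCurveVelocity H h s) s := by
  have hscale : HasDerivAt (fun t ↦ -(H / (2 * deriv h t)))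
      (H * deriv (deriv h) s / (2 * deriv h s ^ 2)) s := by
    have := ((hasDerivAt_const s H).div (h₂.hasDerivAt.const_mul 2) (by simpa using hs)).neg
    refine this.congr_deriv ?_
    field_simp
    ring
  refine (hscale.smul_comp h₁.hasDerivAt (hasDerivAt_nullLift _)).congr_deriv ?_
  rw [nullCurveVelocity]
  congr 2
  field_simp

theorem hasDerivAt_nullCurveVelocity (h₁ : DifferentiableAt ℝ h s)
    (h₂ : DifferentiableAt ℝ (deriv h) s) (h₃ : DifferentiableAt ℝ (deriv (deriv h)) s)
    (hs : deriv h s ≠ 0) :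
    HasDerivAt (nullCurveVelocity H h)
      ((H * (deriv (deriv (deriv h)) s * deriv h s - 2 * deriv (deriv h) s ^ 2)
          / (2 * deriv h s ^ 3)) • nullLift (h s)
        + (H * deriv (deriv h) s / (2 * deriv h s)) • nullLiftDeriv (h s)
        + (-(H * deriv h s / 2)) • nullLiftDeriv2) s := by
  have hscale : HasDerivAt (fun t ↦ H * deriv (deriv h) t / (2 * deriv h t ^ 2))
      (H * (deriv (deriv (deriv h)) s * deriv h s - 2 * deriv (deriv h) s ^ 2)
          / (2 * deriv h s ^ 3)) s := by
    have := (h₃.hasDerivAt.const_mul H).div ((h₂.hasDerivAt.pow 2).const_mul 2)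
      (by simpa using hs)
    refine this.congr_deriv ?_
    simp only [Pi.pow_apply]
    field_simp
    ring
  have hfirst := hscale.smul_comp h₁.hasDerivAt (hasDerivAt_nullLift _)
  have hsecond := ((hasDerivAt_nullLiftDeriv _).scomp s h₁.hasDerivAt).const_smul (-(H / 2))
  refine (hfirst.add hsecond).congr_deriv ?_
  match_scalars <;> field_simp

end NullCurve

theorem stmt8_general
    (I : Set ℝ) (hIopen : IsOpen I)
    (H : ℝ) (hH : H ≠ 0)
    (h : ℝ → ℝ) (hhsm : ContDiffOn ℝ (⊤ : ℕ∞) h I)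
    (hh' : ∀ s ∈ I, deriv h s ≠ 0)
    (Sh : ℝ → ℝ)
    (hShdef : ∀ s, Sh s = deriv (deriv (deriv h)) s / deriv h s
      - (3 / 2) * (deriv (deriv h) s / deriv h s) ^ 2)
    (B : ℝ → Fin 3 → ℝ)
    (hBdef : ∀ s, B s =
      (-(H / (2 * deriv h s))) • ![-1 - h s ^ 2, 1 - h s ^ 2, 2 * h s]) :
    ∀ s ∈ I,
      ml (B s) (B s) = 0 ∧
      ml (deriv B s) (deriv B s) = H ^ 2 ∧
      0 < H * det3 (B s) (deriv B s) (deriv (deriv B) s) ∧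
      ml (deriv (deriv B) s) (deriv (deriv B) s) = 2 * H ^ 2 * Sh s ∧
      -(ml (deriv (deriv B) s) (deriv (deriv B) s)) / (2 * H ^ 3)
        = -(Sh s) / H := by
  intro s hs
  have hdiff := fun t (ht : t ∈ I) ↦
    (hhsm.of_le (WithTop.coe_le_coe.2 le_top)).differentiableAt_deriv_deriv hIopen ht
  obtain ⟨h₁, h₂, h₃⟩ := hdiff s hs
  have hh's := hh' s hs
  have hB : B = nullCurve H h := funext hBdef
  have hvel : deriv B =ᶠ[𝓝 s] nullCurveVelocity H h := by
    filter_upwards [hIopen.mem_nhds hs] with t ht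
    obtain ⟨h₁, h₂, -⟩ := hdiff t ht
    rw [hB, (hasDerivAt_nullCurve h₁ h₂ (hh' t ht)).deriv]
  rw [hvel.eq_of_nhds, hvel.deriv_eq, (hasDerivAt_nullCurveVelocity h₁ h₂ h₃ hh's).deriv,
    hB, nullCurve, nullCurveVelocity, ml_smul_nullLift_self, ml_self_nullLift_nullLiftDeriv_comb,
    det3_nullLift_frame_comb, ml_self_nullLift_frame_comb]
  have hSchwarzian : 4 * (H * deriv (deriv h) s / (2 * deriv h s)) ^ 2
      - 8 * (H * (deriv (deriv (deriv h)) s * deriv h s - 2 * deriv (deriv h) s ^ 2)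
          / (2 * deriv h s ^ 3)) * -(H * deriv h s / 2) = 2 * H ^ 2 * Sh s := by
    rw [hShdef]
    field_simp
    ring
  refine ⟨rfl, by ring, ?_, hSchwarzian, ?_⟩
  · calc 0 < H ^ 4 := by positivity
      _ = _ := by field_simp; norm_num
  · rw [hSchwarzian]
    field_simp

/-- the vector field `B = −(H/(2h'))(−1−h², 1−h², 2h)` is lightlike,
satisfies `⟨B',B'⟩ = H²`, `H·det(B,B',B'') > 0`, and `⟨B'',B''⟩ = 2H²·S(h)`,
so that `−⟨B'',B''⟩/(2H³) = −S(h)/H`. -/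
theorem stmt8
    (I : Set ℝ) (hIopen : IsOpen I) (hIconn : I.OrdConnected)
    (H : ℝ) (hH : H ≠ 0)
    (h : ℝ → ℝ) (hhsm : ContDiffOn ℝ (⊤ : ℕ∞) h I)
    (hh' : ∀ s ∈ I, deriv h s ≠ 0)
    (Sh : ℝ → ℝ)
    (hShdef : ∀ s, Sh s = deriv (deriv (deriv h)) s / deriv h s
      - (3 / 2) * (deriv (deriv h) s / deriv h s) ^ 2)
    (B : ℝ → Fin 3 → ℝ)
    (hBdef : ∀ s, B s =
      (-(H / (2 * deriv h s))) • ![-1 - h s ^ 2, 1 - h s ^ 2, 2 * h s]) :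
    ∀ s ∈ I,
      ml (B s) (B s) = 0 ∧
      ml (deriv B s) (deriv B s) = H ^ 2 ∧
      0 < H * det3 (B s) (deriv B s) (deriv (deriv B) s) ∧
      ml (deriv (deriv B) s) (deriv (deriv B) s) = 2 * H ^ 2 * Sh s ∧
      -(ml (deriv (deriv B) s) (deriv (deriv B) s)) / (2 * H ^ 3)
        = -(Sh s) / H :=
  stmt8_general I hIopen H hH h hhsm hh' Sh hShdef B hBdef
end
end

section
/- Let I ⊆ ℝ be an open interval, H a nonzero real number, and A, B, C : I → ℝ³ smooth maps with ⟨A,A⟩ = ⟨B,B⟩ = 0, ⟨A,B⟩ = −1, ⟨A,C⟩ = ⟨B,C⟩ = 0, ⟨C,C⟩ = 1, C = A × B, satisfying Frenet–Serret equations A' = κ₁·A + κ₂·C, B' = −κ₁·B + H·C, C' = H·A + κ₂·B for smooth functions κ₁, κ₂. Define N_L(s,t) := −C(s) − t·H·B(s) and write B = (B₁,B₂,B₃), C = (C₁,C₂,C₃). Then: (i) the third component of N_L(s,t) vanishes if and only if C₃(s) + t·H·B₃(s) = 0; (ii) at any (s,t) where the third component of N_L vanishes one has B₃(s) ≠ 0,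 hence t = −C₃(s)/(H·B₃(s)), and the third component of ∂N_L/∂t at (s,t) equals −H·B₃(s) ≠ 0; (iii) if B₃(s) = 0, then the third component of N_L(s,t) is nonzero for every t ∈ ℝ. -/
noncomputable section

/-! Since `N_L(s,t)₃ = -(C₃ + t H B₃)` is affine in `t` with slope `-H B₃`, everything reduces to
`B₃` and `C₃` never vanishing together. On the plane `x₃ = 0` the form has signature `(−,+)`,
where a null vector orthogonal to a unit spacelike vector must vanish; but `⟨A,B⟩ = −1`
forces `B ≠ 0`. -/

theorem eq_zero_of_null_of_orthogonal_unit {b c : Fin 3 → ℝ} (hbb : ml b b = 0)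
    (hbc : ml b c = 0) (hcc : ml c c = 1) (hb : b 2 = 0) (hc : c 2 = 0) : b = 0 := by
  simp only [ml, hb, hc, mul_zero, add_zero] at hbb hbc hcc
  -- `⟨b,b⟩⟨c,c⟩ − ⟨b,c⟩² = −(b₀c₁ − b₁c₀)²` on this plane
  have hdet : b 0 * c 1 - b 1 * c 0 = 0 := eq_zero_of_pow_eq_zero (n := 2) (by
    linear_combination (-(-c 0 ^ 2 + c 1 ^ 2)) * hbb + (-(b 0 * c 0) + b 1 * c 1) * hbc)
  have hb0 : b 0 = 0 := eq_zero_of_pow_eq_zero (n := 2) (by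
    linear_combination (-b 0 ^ 2) * hcc + (b 0 * c 1 + b 1 * c 0) * hdet + c 0 ^ 2 * hbb)
  have hb1 : b 1 = 0 := eq_zero_of_pow_eq_zero (n := 2) (by linear_combination hbb + b 0 * hb0)
  ext i
  fin_cases i <;> assumption

theorem third_ne_zero_of_null_frame {a b c : Fin 3 → ℝ} (hbb : ml b b = 0)
    (hab : ml a b = -1) (hbc : ml b c = 0) (hcc : ml c c = 1) (hb : b 2 = 0) : c 2 ≠ 0 := by
  intro hc
  rw [eq_zero_of_null_of_orthogonal_unit hbb hbc hcc hb hc] at hab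
  simp [ml] at hab

theorem stmt11_general
    (I : Set ℝ)
    (H : ℝ) (hH : H ≠ 0)
    (A B C : ℝ → Fin 3 → ℝ)
    (hBB : ∀ s ∈ I, ml (B s) (B s) = 0)
    (hAB : ∀ s ∈ I, ml (A s) (B s) = -1)
    (hBC : ∀ s ∈ I, ml (B s) (C s) = 0)
    (hCC : ∀ s ∈ I, ml (C s) (C s) = 1)
    (NL : ℝ → ℝ → Fin 3 → ℝ)
    (hNLdef : ∀ s t, NL s t = -C s - (t * H) • B s) :
    (∀ s ∈ I, ∀ t : ℝ, NL s t 2 = 0 ↔ C s 2 + t * H * B s 2 = 0) ∧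
    (∀ s ∈ I, ∀ t : ℝ, NL s t 2 = 0 →
      B s 2 ≠ 0 ∧ t = -(C s 2) / (H * B s 2) ∧
      deriv (fun u => NL s u 2) t = -(H * B s 2) ∧
      deriv (fun u => NL s u 2) t ≠ 0) ∧
    (∀ s ∈ I, B s 2 = 0 → ∀ t : ℝ, NL s t 2 ≠ 0) := by
  have hNL : ∀ s t, NL s t 2 = -(C s 2 + t * H * B s 2) := fun s t => by
    simp only [hNLdef, Pi.sub_apply, Pi.neg_apply, Pi.smul_apply, smul_eq_mul]
    ring
  have hderiv : ∀ s t, deriv (fun u => NL s u 2) t = -(H * B s 2) := fun s t => by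
    simp [hNL]
  have hBC₃ : ∀ s ∈ I, B s 2 = 0 → C s 2 ≠ 0 := fun s hs =>
    third_ne_zero_of_null_frame (hBB s hs) (hAB s hs) (hBC s hs) (hCC s hs)
  have hzero : ∀ s t, NL s t 2 = 0 ↔ C s 2 + t * H * B s 2 = 0 := fun s t => by
    rw [hNL, neg_eq_zero]
  refine ⟨fun s _ => hzero s, fun s hs t ht => ?_, fun s hs hB t ht => ?_⟩
  · rw [hzero] at ht
    have hB : B s 2 ≠ 0 := fun hB => hBC₃ s hs hB (by simpa [hB] using ht)
    refine ⟨hB, ?_, hderiv s t, ?_⟩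
    · field_simp
      linear_combination ht
    · rw [hderiv s t]
      exact neg_ne_zero.mpr (mul_ne_zero hH hB)
  · rw [hzero, hB] at ht
    exact hBC₃ s hs hB (by simpa using ht)

/-- characterization of the zero set of the third component of
the normal `N_L(s,t) = −C(s) − tH·B(s)` of a constant mean curvature `H` null
scroll; on it `B₃ ≠ 0`, `t = −C₃/(H·B₃)` and `∂ₜ⟨N_L,e₃⟩ = −H·B₃ ≠ 0`. -/
theorem stmt11
    (I : Set ℝ) (hIopen : IsOpen I) (hIconn : I.OrdConnected)
    (H : ℝ) (hH : H ≠ 0)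
    (A B C : ℝ → Fin 3 → ℝ) (κ₁ κ₂ : ℝ → ℝ)
    (hAsm : ContDiffOn ℝ (⊤ : ℕ∞) A I) (hBsm : ContDiffOn ℝ (⊤ : ℕ∞) B I)
    (hCsm : ContDiffOn ℝ (⊤ : ℕ∞) C I)
    (hκ₁sm : ContDiffOn ℝ (⊤ : ℕ∞) κ₁ I) (hκ₂sm : ContDiffOn ℝ (⊤ : ℕ∞) κ₂ I)
    (hAA : ∀ s ∈ I, ml (A s) (A s) = 0)
    (hBB : ∀ s ∈ I, ml (B s) (B s) = 0)
    (hAB : ∀ s ∈ I, ml (A s) (B s) = -1)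
    (hAC : ∀ s ∈ I, ml (A s) (C s) = 0)
    (hBC : ∀ s ∈ I, ml (B s) (C s) = 0)
    (hCC : ∀ s ∈ I, ml (C s) (C s) = 1)
    (hcross : ∀ s ∈ I, C s = lcross (A s) (B s))
    (hA' : ∀ s ∈ I, deriv A s = κ₁ s • A s + κ₂ s • C s)
    (hB' : ∀ s ∈ I, deriv B s = (-(κ₁ s)) • B s + H • C s)
    (hC' : ∀ s ∈ I, deriv C s = H • A s + κ₂ s • B s)
    (NL : ℝ → ℝ → Fin 3 → ℝ)
    (hNLdef : ∀ s t, NL s t = -C s - (t * H) • B s) :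
    (∀ s ∈ I, ∀ t : ℝ, NL s t 2 = 0 ↔ C s 2 + t * H * B s 2 = 0) ∧
    (∀ s ∈ I, ∀ t : ℝ, NL s t 2 = 0 →
      B s 2 ≠ 0 ∧ t = -(C s 2) / (H * B s 2) ∧
      deriv (fun u => NL s u 2) t = -(H * B s 2) ∧
      deriv (fun u => NL s u 2) t ≠ 0) ∧
    (∀ s ∈ I, B s 2 = 0 → ∀ t : ℝ, NL s t 2 ≠ 0) :=
  stmt11_general I H hH A B C hBB hAB hBC hCC NL hNLdef
end
end

section
/- Let I ⊆ ℝ be an open interval, H a nonzero real number, and A, B, C : I → ℝ³ smooth maps with ⟨A,A⟩ = ⟨B,B⟩ = 0, ⟨A,B⟩ = −1, ⟨A,C⟩ = ⟨B,C⟩ = 0, ⟨C,C⟩ = 1, satisfying Frenet–Serret equations A' = κ₁·A + κ₂·C, B' = −κ₁·B + H·C, C' = H·A + κ₂·B for smooth functions κ₁, κ₂. Assume B₃(s) ≠ 0 for all s ∈ I, let γ : I → ℝ³ be smooth with γ' = A, and set c_L(s) := γ(s) − (C₃(s)/(H·B₃(s)))·B(s). Then c_L' = A + (−A₃/B₃ −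 κ₂/H + C₃²/B₃²)·B − (C₃/B₃)·C on I; in particular the third component of c_L' equals −κ₂·B₃/H, and at any s₀ ∈ I with κ₂(s₀) = 0 the third component of c_L''(s₀) equals −κ₂'(s₀)·B₃(s₀)/H. -/
noncomputable section

/-!
Differentiating `γ - (C₃ / (H B₃)) • B` with `γ' = A`, `B' = -κ₁ B + H C` and `C' = H A + κ₂ B`
gives the velocity formula; the `κ₁` terms cancel. Its third component collapses to
`-κ₂ B₃ / H`, and differentiating that once more at a zero of `κ₂` leaves only `-κ₂' B₃ / H`.
-/

open Filter Topology

theorem ContDiffOn.hasDerivAt_of_deriv_eq {𝕜 E : Type*} [NontriviallyNormedField 𝕜]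
    [NormedAddCommGroup E] [NormedSpace 𝕜 E] {n : WithTop ℕ∞} {f : 𝕜 → E} {s : Set 𝕜}
    {x : 𝕜} {f' : E} (hf : ContDiffOn 𝕜 n f s) (hn : n ≠ 0) (hs : IsOpen s) (hx : x ∈ s)
    (h : deriv f x = f') : HasDerivAt f f' x :=
  h ▸ ((hf.contDiffAt (hs.mem_nhds hx)).differentiableAt hn).hasDerivAt

theorem HasDerivAt.apply_eq_of_eventuallyEq {𝕜 ι F : Type*} [NontriviallyNormedField 𝕜]
    [Fintype ι] [NormedAddCommGroup F] [NormedSpace 𝕜 F] {g : 𝕜 → ι → F} {g' : ι → F}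
    {φ : 𝕜 → F} {φ' : F} {x : 𝕜} {i : ι} (hg : HasDerivAt g g' x) (hφ : HasDerivAt φ φ' x)
    (h : ∀ᶠ y in 𝓝 x, g y i = φ y) : g' i = φ' :=
  (hasDerivAt_pi.1 hg i).unique (hφ.congr_of_eventuallyEq h)

section SingularCurve

variable {ι : Type*}

/-- `c_L` is `singularCurve H γ B C 2`, the index `2 : Fin 3` being the third coordinate. -/
def singularCurve (H : ℝ) (γ B C : ℝ → ι → ℝ) (i : ι) (s : ℝ) : ι → ℝ :=
  γ s - (C s i / (H * B s i)) • B s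

theorem contDiffOn_singularCurve [Fintype ι] {n : WithTop ℕ∞} {I : Set ℝ} {H : ℝ}
    {γ B C : ℝ → ι → ℝ} (i : ι) (hH : H ≠ 0) (hBi : ∀ s ∈ I, B s i ≠ 0) (hγ : ContDiffOn ℝ n γ I)
    (hB : ContDiffOn ℝ n B I) (hC : ContDiffOn ℝ n C I) :
    ContDiffOn ℝ n (singularCurve H γ B C i) I :=
  hγ.sub (((contDiffOn_pi.1 hC i).div (contDiffOn_const.mul (contDiffOn_pi.1 hB i))
    fun s hs => mul_ne_zero hH (hBi s hs)).smul hB)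

theorem hasDerivAt_singularCurve [Fintype ι] {H s k₁ k₂ : ℝ} {a : ι → ℝ}
    {γ B C : ℝ → ι → ℝ} (i : ι) (hH : H ≠ 0) (hBi : B s i ≠ 0) (hγ : HasDerivAt γ a s)
    (hB : HasDerivAt B (-k₁ • B s + H • C s) s) (hC : HasDerivAt C (H • a + k₂ • B s) s) :
    HasDerivAt (singularCurve H γ B C i)
      (a + (-(a i) / B s i - k₂ / H + C s i ^ 2 / B s i ^ 2) • B s
        + (-(C s i / B s i)) • C s) s := by
  have hBi' : HasDerivAt (fun t => B t i) (-k₁ * B s i + H * C s i) s := by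
    simpa using hasDerivAt_pi.1 hB i
  have hCi' : HasDerivAt (fun t => C t i) (H * a i + k₂ * B s i) s := by
    simpa using hasDerivAt_pi.1 hC i
  have hcoef := hCi'.div (hBi'.const_mul H) (mul_ne_zero hH hBi)
  refine (hγ.sub (hcoef.smul hB)).congr_deriv ?_
  ext j
  simp only [Pi.add_apply, Pi.sub_apply, Pi.smul_apply, Pi.div_apply, smul_eq_mul]
  field_simp
  ring

theorem singularCurve_velocity_apply_self {H k₂ : ℝ} {a b c : ι → ℝ} {i : ι}
    (hbi : b i ≠ 0) :
    (a + (-(a i) / b i - k₂ / H + c i ^ 2 / b i ^ 2) • b + (-(c i / b i)) • c) i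
      = -(k₂ * b i) / H := by
  simp only [Pi.add_apply, Pi.smul_apply, smul_eq_mul]
  field_simp
  ring

end SingularCurve

theorem stmt12_general
    (I : Set ℝ) (hIopen : IsOpen I)
    (H : ℝ) (hH : H ≠ 0)
    (A B C : ℝ → Fin 3 → ℝ) (κ₁ κ₂ : ℝ → ℝ)
    (hBsm : ContDiffOn ℝ (⊤ : ℕ∞) B I)
    (hCsm : ContDiffOn ℝ (⊤ : ℕ∞) C I)
    (hκ₂sm : ContDiffOn ℝ (⊤ : ℕ∞) κ₂ I)
    (hB' : ∀ s ∈ I, deriv B s = (-(κ₁ s)) • B s + H • C s)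
    (hC' : ∀ s ∈ I, deriv C s = H • A s + κ₂ s • B s)
    (hB₃ : ∀ s ∈ I, B s 2 ≠ 0)
    (γ : ℝ → Fin 3 → ℝ)
    (hγsm : ContDiffOn ℝ (⊤ : ℕ∞) γ I)
    (hγ' : ∀ s ∈ I, deriv γ s = A s)
    (cL : ℝ → Fin 3 → ℝ)
    (hcLdef : ∀ s, cL s = γ s - (C s 2 / (H * B s 2)) • B s) :
    (∀ s ∈ I, deriv cL s =
      A s + (-(A s 2) / B s 2 - κ₂ s / H + (C s 2) ^ 2 / (B s 2) ^ 2) • B s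
        + (-(C s 2 / B s 2)) • C s) ∧
    (∀ s ∈ I, deriv cL s 2 = -(κ₂ s * B s 2) / H) ∧
    (∀ s₀ ∈ I, κ₂ s₀ = 0 →
      deriv (deriv cL) s₀ 2 = -(deriv κ₂ s₀ * B s₀ 2) / H) := by
  obtain rfl : cL = singularCurve H γ B C 2 := funext hcLdef
  set cL := singularCurve H γ B C 2
  have hB s (hs : s ∈ I) := hBsm.hasDerivAt_of_deriv_eq (by simp) hIopen hs (hB' s hs)
  have velocity s (hs : s ∈ I) :=
    hasDerivAt_singularCurve 2 hH (hB₃ s hs)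
      (hγsm.hasDerivAt_of_deriv_eq (by simp) hIopen hs (hγ' s hs)) (hB s hs)
      (hCsm.hasDerivAt_of_deriv_eq (by simp) hIopen hs (hC' s hs))
  have velocity_apply (s) (hs : s ∈ I) : deriv cL s 2 = -(κ₂ s * B s 2) / H := by
    rw [(velocity s hs).deriv]
    exact singularCurve_velocity_apply_self (hB₃ s hs)
  refine ⟨fun s hs => (velocity s hs).deriv, velocity_apply, fun s₀ hs₀ hκ₂ => ?_⟩
  have acceleration : HasDerivAt (deriv cL) (deriv (deriv cL) s₀) s₀ :=
    ((contDiffOn_singularCurve 2 hH hB₃ hγsm hBsm hCsm).deriv_of_isOpen hIopen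
      (m := (⊤ : ℕ∞)) (by simp)).hasDerivAt_of_deriv_eq (by simp) hIopen hs₀ rfl
  have hB₃' : HasDerivAt (fun s => B s 2) (-κ₁ s₀ * B s₀ 2 + H * C s₀ 2) s₀ := by
    simpa using hasDerivAt_pi.1 (hB s₀ hs₀) 2
  have hκ₂' := hκ₂sm.hasDerivAt_of_deriv_eq (by simp) hIopen hs₀ rfl
  rw [acceleration.apply_eq_of_eventuallyEq ((hκ₂'.mul hB₃').neg.div_const H)
    (eventually_of_mem (hIopen.mem_nhds hs₀) velocity_apply), hκ₂]
  ring

/-- derivative formula for the singular curve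
`c_L(s) = γ(s) − (C₃/(H·B₃))·B(s)` on a constant mean curvature `H` null scroll. -/
theorem stmt12
    (I : Set ℝ) (hIopen : IsOpen I) (hIconn : I.OrdConnected)
    (H : ℝ) (hH : H ≠ 0)
    (A B C : ℝ → Fin 3 → ℝ) (κ₁ κ₂ : ℝ → ℝ)
    (hAsm : ContDiffOn ℝ (⊤ : ℕ∞) A I) (hBsm : ContDiffOn ℝ (⊤ : ℕ∞) B I)
    (hCsm : ContDiffOn ℝ (⊤ : ℕ∞) C I)
    (hκ₁sm : ContDiffOn ℝ (⊤ : ℕ∞) κ₁ I) (hκ₂sm : ContDiffOn ℝ (⊤ : ℕ∞) κ₂ I)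
    (hAA : ∀ s ∈ I, ml (A s) (A s) = 0)
    (hBB : ∀ s ∈ I, ml (B s) (B s) = 0)
    (hAB : ∀ s ∈ I, ml (A s) (B s) = -1)
    (hAC : ∀ s ∈ I, ml (A s) (C s) = 0)
    (hBC : ∀ s ∈ I, ml (B s) (C s) = 0)
    (hCC : ∀ s ∈ I, ml (C s) (C s) = 1)
    (hA' : ∀ s ∈ I, deriv A s = κ₁ s • A s + κ₂ s • C s)
    (hB' : ∀ s ∈ I, deriv B s = (-(κ₁ s)) • B s + H • C s)
    (hC' : ∀ s ∈ I, deriv C s = H • A s + κ₂ s • B s)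
    (hB₃ : ∀ s ∈ I, B s 2 ≠ 0)
    (γ : ℝ → Fin 3 → ℝ)
    (hγsm : ContDiffOn ℝ (⊤ : ℕ∞) γ I)
    (hγ' : ∀ s ∈ I, deriv γ s = A s)
    (cL : ℝ → Fin 3 → ℝ)
    (hcLdef : ∀ s, cL s = γ s - (C s 2 / (H * B s 2)) • B s) :
    (∀ s ∈ I, deriv cL s =
      A s + (-(A s 2) / B s 2 - κ₂ s / H + (C s 2) ^ 2 / (B s 2) ^ 2) • B s
        + (-(C s 2 / B s 2)) • C s) ∧
    (∀ s ∈ I, deriv cL s 2 = -(κ₂ s * B s 2) / H) ∧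
    (∀ s₀ ∈ I, κ₂ s₀ = 0 →
      deriv (deriv cL) s₀ 2 = -(deriv κ₂ s₀ * B s₀ 2) / H) :=
  stmt12_general I hIopen H hH A B C κ₁ κ₂ hBsm hCsm hκ₂sm hB' hC' hB₃ γ hγsm hγ' cL hcLdef
end
end

section
/- Let I ⊆ ℝ be an open interval, H a nonzero real number, and A, B, C : I → ℝ³ smooth maps with ⟨A,A⟩ = ⟨B,B⟩ = 0, ⟨A,B⟩ = −1, ⟨A,C⟩ = ⟨B,C⟩ = 0, ⟨C,C⟩ = 1, satisfying the B-scroll Frenet–Serret equations A' = κ₂·C, B' = H·C, C' = H·A + κ₂·B for a smooth function κ₂. Define N_L : I × ℝ → ℝ³ by N_L(s,t) := −C(s) − t·H·B(s). Then ⟨N_L, N_L⟩ = 1 everywhere, and N_L satisfies componentwise the partial differential equation 2·∂ₜ∂ₛN_L + ∂ₜ(t²H²·∂ₜN_L) = 2H²·N_L on I × ℝ. -/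
/-!
`N_L(s,t) = -C(s) + t·(-H B(s))` is affine in `t`, so its d'Alembertian only involves the slope
`-H B` and its `s`-derivative `-H B' = -H² C`: it equals `2(-H² C) + 2H²t(-H B) = 2H² N_L`.
That `N_L` lies in de Sitter space is the expansion of `⟨C + tH B, C + tH B⟩` in the frame
`⟨C,C⟩ = 1`, `⟨B,C⟩ = ⟨B,B⟩ = 0`.
-/

noncomputable section

theorem ml_neg_sub_smul_self (b c : Fin 3 → ℝ) (a : ℝ) :
    ml (-c - a • b) (-c - a • b) = ml c c + 2 * a * ml b c + a ^ 2 * ml b b := by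
  simp only [ml, Pi.sub_apply, Pi.neg_apply, Pi.smul_apply, smul_eq_mul]
  ring

theorem wave_operator_of_ruled {N : ℝ → ℝ → ℝ} {p q : ℝ → ℝ} {s q' : ℝ}
    (hN : ∀ v u, N v u = p v + u * q v) (hp : DifferentiableAt ℝ p s)
    (hq : HasDerivAt q q' s) (c t : ℝ) :
    2 * deriv (fun u => deriv (fun v => N v u) s) t
        + deriv (fun u => u ^ 2 * c * deriv (fun v => N s v) u) t
      = 2 * (q' + c * t * q s) := by
  have deriv_s : ∀ u, deriv (fun v => N v u) s = deriv p s + u * q' := fun u => by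
    simp only [hN]
    exact (hp.hasDerivAt.add (hq.const_mul u)).deriv
  have deriv_t : ∀ u, deriv (fun v => N s v) u = q s := fun u => by
    simp only [hN]
    exact ((hasDerivAt_mul_const (q s)).const_add (p s)).deriv
  simp only [deriv_s, deriv_t]
  rw [((hasDerivAt_mul_const q').const_add _).deriv,
    (((hasDerivAt_pow 2 t).mul_const c).mul_const (q s)).deriv]
  push_cast
  ring

theorem stmt13_general
    (I : Set ℝ) (hIopen : IsOpen I)
    (H : ℝ)
    (B C : ℝ → Fin 3 → ℝ)
    (hBsm : ContDiffOn ℝ (⊤ : ℕ∞) B I)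
    (hCsm : ContDiffOn ℝ (⊤ : ℕ∞) C I)
    (hBB : ∀ s ∈ I, ml (B s) (B s) = 0)
    (hBC : ∀ s ∈ I, ml (B s) (C s) = 0)
    (hCC : ∀ s ∈ I, ml (C s) (C s) = 1)
    (hB' : ∀ s ∈ I, deriv B s = H • C s)
    (NL : ℝ → ℝ → Fin 3 → ℝ)
    (hNLdef : ∀ s t, NL s t = -C s - (t * H) • B s) :
    (∀ s ∈ I, ∀ t : ℝ, ml (NL s t) (NL s t) = 1) ∧
    (∀ s ∈ I, ∀ t : ℝ, ∀ i : Fin 3,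
      2 * deriv (fun u => deriv (fun v => NL v u i) s) t
        + deriv (fun u => u ^ 2 * H ^ 2 * deriv (fun v => NL s v i) u) t
      = 2 * H ^ 2 * NL s t i) := by
  refine ⟨fun s hs t => ?_, fun s hs t i => ?_⟩
  · rw [hNLdef, ml_neg_sub_smul_self, hCC s hs, hBC s hs, hBB s hs]
    ring
  · have hC : DifferentiableAt ℝ C s :=
      (hCsm.differentiableOn (by simp)).differentiableAt (hIopen.mem_nhds hs)
    have hB : HasDerivAt B (H • C s) s := hB' s hs ▸
      ((hBsm.differentiableOn (by simp)).differentiableAt (hIopen.mem_nhds hs)).hasDerivAt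
    have hNL_ruled : ∀ v u, NL v u i = -C v i + u * -(H * B v i) := fun v u => by
      simp only [hNLdef, Pi.sub_apply, Pi.neg_apply, Pi.smul_apply, smul_eq_mul]
      ring
    rw [wave_operator_of_ruled hNL_ruled (differentiableAt_pi.1 hC i).neg
      ((hasDerivAt_pi.1 hB i).const_mul H).neg, hNL_ruled]
    simp only [Pi.smul_apply, smul_eq_mul]
    ring

/-- the Gauss map `N_L(s,t) = −C(s) − tH·B(s)` of a constant mean
curvature `H` B-scroll takes values in de Sitter 2-space and satisfies the
eigenvalue equation `□N_L = 2H²N_L`, i.e.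
`2·∂ₜ∂ₛN_L + ∂ₜ(t²H²·∂ₜN_L) = 2H²·N_L`. -/
theorem stmt13
    (I : Set ℝ) (hIopen : IsOpen I) (hIconn : I.OrdConnected)
    (H : ℝ) (hH : H ≠ 0)
    (A B C : ℝ → Fin 3 → ℝ) (κ₂ : ℝ → ℝ)
    (hAsm : ContDiffOn ℝ (⊤ : ℕ∞) A I) (hBsm : ContDiffOn ℝ (⊤ : ℕ∞) B I)
    (hCsm : ContDiffOn ℝ (⊤ : ℕ∞) C I) (hκsm : ContDiffOn ℝ (⊤ : ℕ∞) κ₂ I)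
    (hAA : ∀ s ∈ I, ml (A s) (A s) = 0)
    (hBB : ∀ s ∈ I, ml (B s) (B s) = 0)
    (hAB : ∀ s ∈ I, ml (A s) (B s) = -1)
    (hAC : ∀ s ∈ I, ml (A s) (C s) = 0)
    (hBC : ∀ s ∈ I, ml (B s) (C s) = 0)
    (hCC : ∀ s ∈ I, ml (C s) (C s) = 1)
    (hA' : ∀ s ∈ I, deriv A s = κ₂ s • C s)
    (hB' : ∀ s ∈ I, deriv B s = H • C s)
    (hC' : ∀ s ∈ I, deriv C s = H • A s + κ₂ s • B s)
    (NL : ℝ → ℝ → Fin 3 → ℝ)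
    (hNLdef : ∀ s t, NL s t = -C s - (t * H) • B s) :
    (∀ s ∈ I, ∀ t : ℝ, ml (NL s t) (NL s t) = 1) ∧
    (∀ s ∈ I, ∀ t : ℝ, ∀ i : Fin 3,
      2 * deriv (fun u => deriv (fun v => NL v u i) s) t
        + deriv (fun u => u ^ 2 * H ^ 2 * deriv (fun v => NL s v i) u) t
      = 2 * H ^ 2 * NL s t i) :=
  stmt13_general I hIopen H B C hBsm hCsm hBB hBC hCC hB' NL hNLdef
end
end

section
/- Let A, B, C ∈ ℝ³ satisfy ⟨A,A⟩ = ⟨B,B⟩ = 0, ⟨A,B⟩ = −1, ⟨A,C⟩ = ⟨B,C⟩ = 0, ⟨C,C⟩ = 1, and suppose B₃ ≠ 0. Let H ≠ 0 and κ₂ be real numbers, and set v := A + (−A₃/B₃ − κ₂/H + C₃²/B₃²)·B − (C₃/B₃)·C. Then the first two components of v both vanish (i.e. v is a scalar multiple of e₃ = (0,0,1)) if and only if (κ₂/H)·B₃² = 1 and 2·A₃·B₃ + 1 − C₃² = 0. -/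
/-!
The columns `A, B, C` form a null frame: with `F = (A | B | C)` and `η = diag(-1, 1, 1)`,
`Fᵀ η F = Q` where `Q² = 1`. Since a one-sided inverse of a square matrix is two-sided,
`F Q Fᵀ = η`: this is the completeness relation
`-(A ⊗ B + B ⊗ A) + C ⊗ C = η`. Its third column is `e₃ = -B₃ A - A₃ B + C₃ C` and its
`(3,3)` entry is `C₃² - 2 A₃ B₃ = 1`, so the second condition always holds. Substituting into `v`
gives `B₃² v = (1 - (κ₂/H) B₃²) B - B₃ e₃`, and the null vector `B` with `B₃ ≠ 0` has `B₁ ≠ 0`.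
-/

noncomputable section

open Matrix

lemma ml_comm_s14 (x y : Fin 3 → ℝ) : ml x y = ml y x := by
  unfold ml; ring

structure IsNullFrame (A B C : Fin 3 → ℝ) : Prop where
  AA : ml A A = 0
  BB : ml B B = 0
  AB : ml A B = -1
  AC : ml A C = 0
  BC : ml B C = 0
  CC : ml C C = 1

def minkowskiMetric : Matrix (Fin 3) (Fin 3) ℝ := diagonal ![-1, 1, 1]

def nullFrameGram : Matrix (Fin 3) (Fin 3) ℝ := !![0, -1, 0; -1, 0, 0; 0, 0, 1]

lemma Matrix.mul_mul_transpose_eq_of_transpose_mul_mul_eq {n R : Type*} [Fintype n]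
    [DecidableEq n] [CommRing R] {F G Q : Matrix n n R} (hG : G * G = 1) (hQ : Q * Q = 1)
    (h : Fᵀ * G * F = Q) : F * Q * Fᵀ = G := by
  have hleft : (Q * Fᵀ * G) * F = 1 := by simp only [Matrix.mul_assoc] at h ⊢; rw [h, hQ]
  have hright : F * (Q * Fᵀ * G) = 1 := mul_eq_one_comm.mp hleft
  calc F * Q * Fᵀ = F * (Q * Fᵀ * G) * G := by simp only [Matrix.mul_assoc, hG, Matrix.mul_one]
    _ = G := by rw [hright, Matrix.one_mul]

lemma of_mul_minkowskiMetric_mul_transpose_apply {ι : Type*} (r : ι → Fin 3 → ℝ) (i j : ι) :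
    (of r * minkowskiMetric * (of r)ᵀ) i j = ml (r i) (r j) := by
  simp [mul_apply, Fin.sum_univ_three, minkowskiMetric, ml]

namespace IsNullFrame

variable {A B C : Fin 3 → ℝ}

lemma gram_eq (hF : IsNullFrame A B C) :
    (of ![A, B, C]) * minkowskiMetric * (of ![A, B, C])ᵀ = nullFrameGram := by
  ext i j
  rw [of_mul_minkowskiMetric_mul_transpose_apply]
  fin_cases i <;> fin_cases j <;>
    simp [nullFrameGram, hF.AA, hF.BB, hF.AB, hF.AC, hF.BC, hF.CC, ml_comm_s14 B A, ml_comm_s14 C A,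
      ml_comm_s14 C B]

lemma completeness (hF : IsNullFrame A B C) (i j : Fin 3) :
    -(A i * B j) - B i * A j + C i * C j = minkowskiMetric i j := by
  have hη : minkowskiMetric * minkowskiMetric = 1 := by
    ext i j; fin_cases i <;> fin_cases j <;> simp [minkowskiMetric]
  have hQ : nullFrameGram * nullFrameGram = 1 := by
    ext i j; fin_cases i <;> fin_cases j <;> simp [nullFrameGram, mul_apply, Fin.sum_univ_three]
  have h := mul_mul_transpose_eq_of_transpose_mul_mul_eq hη hQ
    (by rw [transpose_transpose]; exact hF.gram_eq)
  rw [← h]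
  simp [nullFrameGram, mul_apply, Fin.sum_univ_three]
  ring

lemma single_two_eq (hF : IsNullFrame A B C) :
    (Pi.single 2 1 : Fin 3 → ℝ) = -(B 2) • A - A 2 • B + C 2 • C := by
  ext i
  have hη : minkowskiMetric i 2 = (Pi.single 2 1 : Fin 3 → ℝ) i := by
    fin_cases i <;> simp [minkowskiMetric]
  simp only [Pi.add_apply, Pi.sub_apply, Pi.smul_apply, smul_eq_mul]
  linear_combination -hF.completeness i 2 - hη

lemma sq_sub_two_mul_mul (hF : IsNullFrame A B C) : C 2 ^ 2 - 2 * A 2 * B 2 = 1 := by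
  have hη : minkowskiMetric 2 2 = 1 := by simp [minkowskiMetric]
  linear_combination hF.completeness 2 2 + hη

lemma sq_smul_eq (hF : IsNullFrame A B C) (hB : B 2 ≠ 0) (k : ℝ) :
    B 2 ^ 2 • (A + (-(A 2) / B 2 - k + C 2 ^ 2 / B 2 ^ 2) • B + (-(C 2 / B 2)) • C) =
      (1 - k * B 2 ^ 2) • B - B 2 • (Pi.single 2 1 : Fin 3 → ℝ) := by
  rw [hF.single_two_eq]
  ext i
  simp only [Pi.add_apply, Pi.sub_apply, Pi.smul_apply, smul_eq_mul]
  field_simp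
  linear_combination B i * hF.sq_sub_two_mul_mul

end IsNullFrame

lemma apply_zero_ne_zero_of_ml_self_eq_zero {B : Fin 3 → ℝ} (hB : ml B B = 0) (h2 : B 2 ≠ 0) :
    B 0 ≠ 0 := by
  intro h0
  unfold ml at hB
  rw [h0] at hB
  exact h2 (pow_eq_zero_iff two_ne_zero |>.mp (by nlinarith [sq_nonneg (B 1), sq_nonneg (B 2)]))

theorem stmt14_general
    (A B C : Fin 3 → ℝ)
    (hAA : ml A A = 0) (hBB : ml B B = 0) (hAB : ml A B = -1)
    (hAC : ml A C = 0) (hBC : ml B C = 0) (hCC : ml C C = 1)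
    (hB₃ : B 2 ≠ 0)
    (H κ₂ : ℝ)
    (v : Fin 3 → ℝ)
    (hvdef : v = A + (-(A 2) / B 2 - κ₂ / H + (C 2) ^ 2 / (B 2) ^ 2) • B
      + (-(C 2 / B 2)) • C) :
    (v 0 = 0 ∧ v 1 = 0) ↔
      (κ₂ / H * (B 2) ^ 2 = 1 ∧ 2 * A 2 * B 2 + 1 - (C 2) ^ 2 = 0) := by
  have hF : IsNullFrame A B C := ⟨hAA, hBB, hAB, hAC, hBC, hCC⟩
  have hv := hF.sq_smul_eq hB₃ (κ₂ / H)
  rw [← hvdef] at hv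
  have hv0 : B 2 ^ 2 * v 0 = (1 - κ₂ / H * B 2 ^ 2) * B 0 := by simpa using congrFun hv 0
  have hv1 : B 2 ^ 2 * v 1 = (1 - κ₂ / H * B 2 ^ 2) * B 1 := by simpa using congrFun hv 1
  have hB₃sq : B 2 ^ 2 ≠ 0 := pow_ne_zero 2 hB₃
  have hB₀ := apply_zero_ne_zero_of_ml_self_eq_zero hBB hB₃
  have hA₃B₃ : 2 * A 2 * B 2 + 1 - C 2 ^ 2 = 0 := by linear_combination -hF.sq_sub_two_mul_mul
  simp only [hA₃B₃, and_true]
  constructor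
  · rintro ⟨h0, -⟩
    rw [h0, mul_zero, eq_comm, mul_eq_zero, or_iff_left hB₀, sub_eq_zero] at hv0
    exact hv0.symm
  · intro hk
    rw [hk, sub_self, zero_mul, mul_eq_zero, or_iff_right hB₃sq] at hv0 hv1
    exact ⟨hv0, hv1⟩

/-- the velocity of the singular curve is parallel to `e₃`
iff `(κ₂/H)·B₃² = 1` and `2A₃B₃ + 1 − C₃² = 0`. -/
theorem stmt14
    (A B C : Fin 3 → ℝ)
    (hAA : ml A A = 0) (hBB : ml B B = 0) (hAB : ml A B = -1)
    (hAC : ml A C = 0) (hBC : ml B C = 0) (hCC : ml C C = 1)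
    (hB₃ : B 2 ≠ 0)
    (H κ₂ : ℝ) (hH : H ≠ 0)
    (v : Fin 3 → ℝ)
    (hvdef : v = A + (-(A 2) / B 2 - κ₂ / H + (C 2) ^ 2 / (B 2) ^ 2) • B
      + (-(C 2 / B 2)) • C) :
    (v 0 = 0 ∧ v 1 = 0) ↔
      (κ₂ / H * (B 2) ^ 2 = 1 ∧ 2 * A 2 * B 2 + 1 - (C 2) ^ 2 = 0) :=
  stmt14_general A B C hAA hBB hAB hAC hBC hCC hB₃ H κ₂ v hvdef
end
end
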